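/- arXiv:1108.5277 — 9 statements merged into one kernel-verified Lean document; each statement's English description precedes it below -/
import Mathlib

section
/- The functions p(k,t) = (1/k!) · Σ_{j=1}^{k+1} (-1)^{k+1-j} j^k · C(k+1, j) · e^{-λt/j} satisfy the pure birth system of ODEs: p'(0,t) = -λ p(0,t), and for k ≥ 1, p'(k,t) = (λ/k) p(k-1,t) - (λ/(k+1)) p(k,t), with initial conditions p(k,0) = δ_{k,0}. -/
/-!
Writing `p(k,t) = ∑ⱼ a(k,j) e^{-λt/j}`, the birth equation for `p(k,·)` holds termwise in `j`:
after clearing factorials it becomes the binomial identity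
`C(m+1,j) (m+2) = C(m+2,j) (m+2-j)`. At `t = 0` the value `k! p(k,0)` is the `(k+1)`-st
forward difference of `x ↦ x^k` at `0`, which vanishes for `k ≥ 1`.
-/

open Finset Real

/-- Transient distribution of the pure birth process with rates `λ/(1+k)`:
`p(k,t) = (1/k!) · Σ_{j=1}^{k+1} (-1)^{k+1-j} j^k C(k+1,j) e^{-λt/j}`. -/
noncomputable def birthP (lam : ℝ) (k : ℕ) (t : ℝ) : ℝ :=
  (1 / (Nat.factorial k : ℝ)) *
    ∑ j ∈ Finset.Icc 1 (k + 1),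
      (-1 : ℝ) ^ (k + 1 - j) * (j : ℝ) ^ k * ((k + 1).choose j : ℝ) *
        Real.exp (-(lam * t) / (j : ℝ))

theorem sum_Icc_neg_one_pow_mul_choose_mul_pow_eq_zero {R : Type*} [CommRing R] {k n : ℕ}
    (hk : k ≠ 0) (hkn : k < n) :
    ∑ j ∈ Icc 1 n, (-1 : R) ^ (n - j) * n.choose j * (j : R) ^ k = 0 := by
  have h := congrFun (fwdDiff_iter_pow_eq_zero_of_lt (R := R) hkn) 0
  rw [fwdDiff_iter_eq_sum_shift, range_eq_Ico, sum_eq_sum_Ico_succ_bot (by omega)] at h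
  simpa [zero_pow hk, Finset.Ico_add_one_right_eq_Icc] using h

noncomputable def birthCoeff (k j : ℕ) : ℝ :=
  (-1) ^ (k + 1 - j) * (j : ℝ) ^ k * (k + 1).choose j / k.factorial

theorem birthP_eq_sum_birthCoeff (lam : ℝ) (k : ℕ) (t : ℝ) :
    birthP lam k t = ∑ j ∈ Icc 1 (k + 1), birthCoeff k j * exp (-(lam * t) / j) := by
  rw [birthP, mul_sum]
  refine sum_congr rfl fun j _ => ?_
  rw [birthCoeff]
  ring

theorem birthCoeff_of_lt {k j : ℕ} (h : k + 1 < j) : birthCoeff k j = 0 := by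
  simp [birthCoeff, Nat.choose_eq_zero_of_lt h]

theorem birthP_eq_sum_birthCoeff_of_le (lam : ℝ) {k N : ℕ} (hN : k + 1 ≤ N) (t : ℝ) :
    birthP lam k t = ∑ j ∈ Icc 1 N, birthCoeff k j * exp (-(lam * t) / j) := by
  rw [birthP_eq_sum_birthCoeff]
  refine sum_subset (Icc_subset_Icc_right hN) fun j hj hj' => ?_
  rw [birthCoeff_of_lt, zero_mul]
  simp only [mem_Icc] at hj hj'
  omega

theorem hasDerivAt_birthP (lam : ℝ) (k : ℕ) (t : ℝ) :
    HasDerivAt (birthP lam k)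
      (∑ j ∈ Icc 1 (k + 1), birthCoeff k j * (-lam / j * exp (-(lam * t) / j))) t := by
  simp_rw [funext (birthP_eq_sum_birthCoeff lam k)]
  refine HasDerivAt.fun_sum fun j _ => HasDerivAt.const_mul _ ?_
  have h := (((hasDerivAt_id t).const_mul lam).neg.div_const (j : ℝ)).exp
  refine h.congr_deriv ?_
  simp only [Pi.neg_apply, id, mul_one]
  ring

theorem neg_one_pow_mul_choose_succ_mul {m j : ℕ} (hj : j ≤ m + 2) :
    (-1 : ℝ) ^ (m + 2 - j) * (m + 2).choose j * ((m : ℝ) + 2 - j)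
      = -((-1 : ℝ) ^ (m + 1 - j) * (m + 1).choose j * ((m : ℝ) + 2)) := by
  have hchoose : ((m + 1).choose j : ℝ) * ((m : ℝ) + 2) = (m + 2).choose j * ((m : ℝ) + 2 - j) := by
    have := congrArg (Nat.cast (R := ℝ)) (Nat.choose_mul_succ_eq (m + 1) j)
    push_cast [Nat.cast_sub (show j ≤ m + 1 + 1 from hj)] at this
    linear_combination this
  rcases hj.lt_or_eq with hj | rfl
  · rw [show m + 2 - j = m + 1 - j + 1 by omega, pow_succ]
    linear_combination (-1 : ℝ) ^ (m + 1 - j) * hchoose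
  · simp

theorem birthCoeff_succ_mul (lam : ℝ) {m j : ℕ} (hj : j ≤ m + 2) (hj0 : j ≠ 0) :
    birthCoeff (m + 1) j * (-lam / j)
      = lam / (m + 1) * birthCoeff m j - lam / (m + 2) * birthCoeff (m + 1) j := by
  have key := neg_one_pow_mul_choose_succ_mul hj
  rw [birthCoeff, birthCoeff, Nat.factorial_succ]
  have hj0' : (j : ℝ) ≠ 0 := by exact_mod_cast hj0
  push_cast
  field_simp
  rw [show m + 1 + 1 = m + 2 by rfl]
  linear_combination (-lam * (j : ℝ) ^ (m + 1)) * key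

theorem hasDerivAt_birthP_zero (lam t : ℝ) :
    HasDerivAt (birthP lam 0) (-lam * birthP lam 0 t) t := by
  convert hasDerivAt_birthP lam 0 t using 1
  simp [birthP_eq_sum_birthCoeff]
  ring

theorem hasDerivAt_birthP_of_pos (lam : ℝ) {k : ℕ} (hk : 1 ≤ k) (t : ℝ) :
    HasDerivAt (birthP lam k)
      (lam / k * birthP lam (k - 1) t - lam / (k + 1) * birthP lam k t) t := by
  obtain ⟨m, rfl⟩ := Nat.exists_eq_add_of_le' hk
  convert hasDerivAt_birthP lam (m + 1) t using 1
  rw [Nat.add_sub_cancel, birthP_eq_sum_birthCoeff_of_le lam (Nat.le_succ (m + 1)) t,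
    birthP_eq_sum_birthCoeff, mul_sum, mul_sum, ← sum_sub_distrib]
  refine sum_congr rfl fun j hj => ?_
  rw [mem_Icc] at hj
  push_cast
  linear_combination (-exp (-(lam * t) / j)) * birthCoeff_succ_mul lam hj.2 (by omega)

theorem birthP_zero_right (lam : ℝ) (k : ℕ) : birthP lam k 0 = if k = 0 then 1 else 0 := by
  split_ifs with hk
  · simp [hk, birthP]
  · have := sum_Icc_neg_one_pow_mul_choose_mul_pow_eq_zero (R := ℝ) hk (lt_add_one k)
    simp only [birthP, mul_zero, neg_zero, zero_div, exp_zero, mul_one]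
    rw [sum_congr rfl fun j _ => mul_right_comm _ _ _, this, mul_zero]

theorem stmt_0_general (lam : ℝ) :
    (∀ t : ℝ, 0 ≤ t →
      HasDerivAt (fun s => birthP lam 0 s) (-lam * birthP lam 0 t) t) ∧
    (∀ k : ℕ, 1 ≤ k → ∀ t : ℝ, 0 ≤ t →
      HasDerivAt (fun s => birthP lam k s)
        (lam / (k : ℝ) * birthP lam (k - 1) t - lam / ((k : ℝ) + 1) * birthP lam k t) t) ∧
    (∀ k : ℕ, birthP lam k 0 = if k = 0 then 1 else 0) :=
  ⟨fun t _ => hasDerivAt_birthP_zero lam t, fun _ hk t _ => hasDerivAt_birthP_of_pos lam hk t,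
    birthP_zero_right lam⟩

/-- The functions `p(k,t)` satisfy the pure birth system
`p'(0,t) = -λ p(0,t)`, `p'(k,t) = (λ/k) p(k-1,t) - (λ/(k+1)) p(k,t)` for `k ≥ 1`,
with initial conditions `p(k,0) = δ_{k,0}`. -/
theorem stmt_0 (lam : ℝ) (hlam : 0 < lam) :
    (∀ t : ℝ, 0 ≤ t →
      HasDerivAt (fun s => birthP lam 0 s) (-lam * birthP lam 0 t) t) ∧
    (∀ k : ℕ, 1 ≤ k → ∀ t : ℝ, 0 ≤ t →
      HasDerivAt (fun s => birthP lam k s)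
        (lam / (k : ℝ) * birthP lam (k - 1) t - lam / ((k : ℝ) + 1) * birthP lam k t) t) ∧
    (∀ k : ℕ, birthP lam k 0 = if k = 0 then 1 else 0) :=
  stmt_0_general lam
end

section
/- For all k ≥ 0 and t ≥ 0, the quantities p(k,t) = (1/k!) · Σ_{j=1}^{k+1} (-1)^{k+1-j} j^k · C(k+1, j) · e^{-λt/j} sum to 1 over k, i.e., Σ_{k=0}^{∞} p(k,t) = 1 for every t ≥ 0. -/
open Finset Real

/-!
Put `x = λt` and `F n = (1/n!) Σ_{j=1}^n (-1)^(n-j) j^n C(n,j) e^(-x/j)`, the probability that the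
process is still below state `n` at time `t`. Pascal's rule and `j C(k+1,j) = (k+1) C(k,j-1)` give
`p(k,t) = F (k+1) - F k` coefficientwise, and `F 0 = 0`, so the series telescopes to `lim F n`.
Expanding `e^(-x/j)` to order `n`, the Taylor part contributes exactly `1`: multiplied by `j^n` it
is a polynomial in `j` of degree `n` with leading coefficient `1` and no constant term, and its
`n`-th finite difference is `n!`. The remainder is at most `(2|x|)^n e^|x| / n!`, which is
summable, so `F n - 1` is absolutely summable and the telescoping sum is `1`.
-/

open scoped Nat

section FiniteDifferences

variable {R : Type*} [CommRing R]

theorem sum_Icc_one_alternating_choose_mul_pow_eq_fwdDiff_iter (n : ℕ) {r : ℕ} (hr : r ≠ 0) :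
    ∑ j ∈ Icc 1 n, (-1 : R) ^ (n - j) * n.choose j * (j : R) ^ r =
      (fwdDiff 1)^[n] (fun x : R ↦ x ^ r) 0 := by
  rw [fwdDiff_iter_eq_sum_shift, range_eq_Ico, Ico_add_one_right_eq_Icc,
    ← insert_Icc_add_one_left_eq_Icc n.zero_le, sum_insert (by simp)]
  simp [zero_pow hr]

theorem sum_Icc_one_alternating_choose_mul_pow_of_lt {n r : ℕ} (hr : r ≠ 0) (hrn : r < n) :
    ∑ j ∈ Icc 1 n, (-1 : R) ^ (n - j) * n.choose j * (j : R) ^ r = 0 := by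
  rw [sum_Icc_one_alternating_choose_mul_pow_eq_fwdDiff_iter n hr,
    fwdDiff_iter_pow_eq_zero_of_lt hrn, Pi.zero_apply]

theorem sum_Icc_one_alternating_choose_mul_pow_self {n : ℕ} (hn : n ≠ 0) :
    ∑ j ∈ Icc 1 n, (-1 : R) ^ (n - j) * n.choose j * (j : R) ^ n = n ! := by
  rw [sum_Icc_one_alternating_choose_mul_pow_eq_fwdDiff_iter n hn, fwdDiff_iter_eq_factorial]
  rfl

end FiniteDifferences

theorem sum_Icc_one_choose_le (n : ℕ) : ∑ j ∈ Icc 1 n, (n.choose j : ℝ) ≤ 2 ^ n := by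
  have hsub : Icc 1 n ⊆ range (n + 1) := fun j hj ↦ mem_range.mpr (by grind)
  calc ∑ j ∈ Icc 1 n, (n.choose j : ℝ) ≤ ∑ j ∈ range (n + 1), (n.choose j : ℝ) :=
        sum_le_sum_of_subset_of_nonneg hsub fun _ _ _ ↦ by positivity
    _ = 2 ^ n := by exact_mod_cast Nat.sum_range_choose n

theorem Real.abs_exp_sub_sum_range_le (x : ℝ) (n : ℕ) :
    |exp x - ∑ m ∈ range n, x ^ m / m !| ≤ |x| ^ n * exp |x| := by
  have := Complex.norm_exp_sub_sum_le_norm_mul_exp x n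
  rw [← Complex.ofReal_exp] at this
  exact_mod_cast this

theorem abs_pow_mul_exp_div_sub_sum_range_le (x : ℝ) {j : ℕ} (hj : 1 ≤ j) (n : ℕ) :
    |(j : ℝ) ^ n * (exp (x / j) - ∑ m ∈ range n, (x / j) ^ m / m !)| ≤
      |x| ^ n * exp |x| := by
  have hj' : (1 : ℝ) ≤ j := by exact_mod_cast hj
  calc |(j : ℝ) ^ n * (exp (x / j) - ∑ m ∈ range n, (x / j) ^ m / m !)|
      ≤ (j : ℝ) ^ n * (|x / j| ^ n * exp |x / j|) := by
        rw [abs_mul, abs_of_nonneg (by positivity)]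
        gcongr
        exact Real.abs_exp_sub_sum_range_le _ n
    _ = |x| ^ n * exp (|x| / j) := by
        rw [abs_div, Nat.abs_cast, div_pow]
        field_simp
    _ ≤ |x| ^ n * exp |x| := by
        gcongr
        exact div_le_self (abs_nonneg x) hj'

theorem sum_Icc_one_alternating_choose_mul_sum_range_div_pow (x : ℝ) {n : ℕ} (hn : n ≠ 0) :
    ∑ j ∈ Icc 1 n, (-1 : ℝ) ^ (n - j) * (j : ℝ) ^ n * (n.choose j : ℝ) *
      ∑ m ∈ range n, (x / j) ^ m / m ! = n ! := by
  calc ∑ j ∈ Icc 1 n, (-1 : ℝ) ^ (n - j) * (j : ℝ) ^ n * (n.choose j : ℝ) *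
        ∑ m ∈ range n, (x / j) ^ m / m !
      = ∑ m ∈ range n, x ^ m / m ! *
          ∑ j ∈ Icc 1 n, (-1 : ℝ) ^ (n - j) * n.choose j * (j : ℝ) ^ (n - m) := by
        simp_rw [mul_sum]
        rw [sum_comm]
        refine sum_congr rfl fun m hm ↦ sum_congr rfl fun j hj ↦ ?_
        have hj0 : (j : ℝ) ≠ 0 := by have := (mem_Icc.mp hj).1; positivity
        rw [← pow_sub_mul_pow (j : ℝ) (mem_range.mp hm).le, div_pow]
        field_simp
    _ = n ! := by
        rw [sum_eq_single_of_mem 0 (mem_range.mpr (Nat.pos_of_ne_zero hn)) fun m hm hm0 ↦ ?_]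
        · simp [sum_Icc_one_alternating_choose_mul_pow_self hn]
        · rw [sum_Icc_one_alternating_choose_mul_pow_of_lt (by grind) (by grind), mul_zero]

theorem hasSum_succ_sub_of_summable_sub {G : Type*} [AddCommGroup G] [TopologicalSpace G]
    [IsTopologicalAddGroup G] {f : ℕ → G} {a : G} (hf : Summable fun n ↦ f n - a) :
    HasSum (fun n ↦ f (n + 1) - f n) (a - f 0) := by
  have h := hf.hasSum
  convert ((hasSum_nat_add_iff' 1).mpr h).sub h using 1
  · simp
  · simp

theorem alternating_choose_pow_div_factorial_succ {k j : ℕ} (hj : 1 ≤ j) :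
    (-1 : ℝ) ^ (k + 1 - j) * (j : ℝ) ^ (k + 1) * ((k + 1).choose j : ℝ) / (k + 1)! =
      (-1 : ℝ) ^ (k - j) * (j : ℝ) ^ k * (k.choose j : ℝ) / k ! +
        (-1 : ℝ) ^ (k + 1 - j) * (j : ℝ) ^ k * ((k + 1).choose j : ℝ) / k ! := by
  obtain ⟨i, rfl⟩ := Nat.exists_eq_add_of_le' hj
  have hsign : (-1 : ℝ) ^ (k + 1 - (i + 1)) * (k.choose (i + 1) : ℝ) =
      -((-1 : ℝ) ^ (k - (i + 1)) * (k.choose (i + 1) : ℝ)) := by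
    rcases le_or_gt (i + 1) k with hik | hki
    · rw [Nat.sub_add_comm hik, pow_succ]
      ring
    · simp [Nat.choose_eq_zero_of_lt hki]
  have hpascal : ((k + 1).choose (i + 1) : ℝ) = k.choose i + k.choose (i + 1) := by
    exact_mod_cast Nat.choose_succ_succ k i
  have hab : ((k + 1).choose (i + 1) : ℝ) * (i + 1) = (k + 1) * k.choose i := by
    exact_mod_cast (Nat.add_one_mul_choose_eq k i).symm
  calc (-1 : ℝ) ^ (k + 1 - (i + 1)) * ((i + 1 : ℕ) : ℝ) ^ (k + 1) *
        ((k + 1).choose (i + 1) : ℝ) / (k + 1)!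
      = (-1 : ℝ) ^ (k + 1 - (i + 1)) * ((i + 1 : ℕ) : ℝ) ^ k * (k.choose i : ℝ) / k ! := by
        rw [Nat.factorial_succ, pow_succ]
        push_cast
        field_simp
        linear_combination hab
    _ = _ := by
        rw [hpascal]
        linear_combination -((i + 1 : ℕ) : ℝ) ^ k / k ! * hsign

noncomputable def birthCDF (lam : ℝ) (n : ℕ) (t : ℝ) : ℝ :=
  (1 / (n ! : ℝ)) * ∑ j ∈ Icc 1 n,
    (-1 : ℝ) ^ (n - j) * (j : ℝ) ^ n * (n.choose j : ℝ) * exp (-(lam * t) / j)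

theorem birthCDF_zero (lam t : ℝ) : birthCDF lam 0 t = 0 := by
  simp [birthCDF]

theorem birthP_eq_birthCDF_succ_sub (lam : ℝ) (k : ℕ) (t : ℝ) :
    birthP lam k t = birthCDF lam (k + 1) t - birthCDF lam k t := by
  have hextend : birthCDF lam k t = (1 / (k ! : ℝ)) * ∑ j ∈ Icc 1 (k + 1),
      (-1 : ℝ) ^ (k - j) * (j : ℝ) ^ k * (k.choose j : ℝ) * exp (-(lam * t) / j) := by
    rw [birthCDF, sum_Icc_succ_top (by omega), Nat.choose_succ_self]
    simp
  rw [hextend, birthP, birthCDF, mul_sum, mul_sum, mul_sum, ← sum_sub_distrib]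
  refine sum_congr rfl fun j hj ↦ ?_
  linear_combination
    -exp (-(lam * t) / j) * alternating_choose_pow_div_factorial_succ (k := k) (mem_Icc.mp hj).1

theorem abs_birthCDF_sub_one_le (lam : ℝ) (n : ℕ) (t : ℝ) :
    |birthCDF lam n t - 1| ≤ (2 * |lam * t|) ^ n / n ! * exp |lam * t| := by
  rcases eq_or_ne n 0 with rfl | hn
  · simpa [birthCDF_zero] using one_le_exp (abs_nonneg (lam * t))
  set x := lam * t
  have hremainder : birthCDF lam n t - 1 = (1 / (n ! : ℝ)) * ∑ j ∈ Icc 1 n,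
      (-1 : ℝ) ^ (n - j) * (j : ℝ) ^ n * (n.choose j : ℝ) *
        (exp (-x / j) - ∑ m ∈ range n, (-x / j) ^ m / m !) := by
    have hfact : (n ! : ℝ) ≠ 0 := by positivity
    simp_rw [mul_sub, sum_sub_distrib,
      sum_Icc_one_alternating_choose_mul_sum_range_div_pow (-x) hn, mul_sub,
      one_div_mul_cancel hfact]
    rfl
  have hterm : ∀ j ∈ Icc 1 n, |(-1 : ℝ) ^ (n - j) * (j : ℝ) ^ n * (n.choose j : ℝ) *
      (exp (-x / j) - ∑ m ∈ range n, (-x / j) ^ m / m !)| ≤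
        (n.choose j : ℝ) * (|x| ^ n * exp |x|) := fun j hj ↦ by
    have hbound := abs_pow_mul_exp_div_sub_sum_range_le (-x) (mem_Icc.mp hj).1 n
    rw [abs_neg] at hbound
    calc _ = (n.choose j : ℝ) *
          |(j : ℝ) ^ n * (exp (-x / j) - ∑ m ∈ range n, (-x / j) ^ m / m !)| := by
          simp only [abs_mul, abs_pow, abs_neg, abs_one, one_pow, one_mul, Nat.abs_cast]
          ring
      _ ≤ (n.choose j : ℝ) * (|x| ^ n * exp |x|) := by gcongr
  rw [hremainder, abs_mul, abs_of_nonneg (by positivity)]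
  calc _ ≤ 1 / (n ! : ℝ) * ((∑ j ∈ Icc 1 n, (n.choose j : ℝ)) * (|x| ^ n * exp |x|)) := by
        rw [sum_mul]
        gcongr
        exact (abs_sum_le_sum_abs _ _).trans (sum_le_sum hterm)
    _ ≤ 1 / (n ! : ℝ) * (2 ^ n * (|x| ^ n * exp |x|)) := by
        gcongr
        exact sum_Icc_one_choose_le n
    _ = (2 * |x|) ^ n / n ! * exp |x| := by ring

theorem stmt_1_general (lam : ℝ) (t : ℝ) :
    HasSum (fun k : ℕ => birthP lam k t) 1 := by
  have hsummable : Summable fun n ↦ birthCDF lam n t - 1 :=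
    .of_norm_bounded ((Real.summable_pow_div_factorial _).mul_right (exp |lam * t|))
      (abs_birthCDF_sub_one_le lam · t)
  simpa [birthP_eq_birthCDF_succ_sub, birthCDF_zero] using
    hasSum_succ_sub_of_summable_sub hsummable

/-- For every `t ≥ 0`, `Σ_{k=0}^∞ p(k,t) = 1`. -/
theorem stmt_1 (lam : ℝ) (hlam : 0 < lam) (t : ℝ) (ht : 0 ≤ t) :
    HasSum (fun k : ℕ => birthP lam k t) 1 :=
  stmt_1_general lam t
end

section
/- The sequence p_{n,k} defined by the recursion p_{n+1,k} = (k/(k+1)) p_{n,k} + (1/k) p_{n,k-1} for n ≥ 0 and 1 ≤ k ≤ n+1, with p_{0,0} = 1, p_{n,0} = 0 for n ≥ 1, and p_{i,j} = 0 for j ≥ i+1, has the closed form p_{n,k} = (1/k!) · Σ_{i=1}^{k} (-1)^{k-i} · C(k+1, i+1) · i^k · (i/(i+1))^{n-k} for all n ≥ k ≥ 1. -/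
/-!
With `r i = i / (i + 1)`, the closed form is a combination `∑ i, c k i * r i ^ (n - k)` of
geometric sequences, so the recursion in `n` reduces to an identity between the coefficients of
each ratio: for `i ≤ k` it is the binomial identity `C(k+1, i+1) (k+2) = C(k+2, i+1) (k+1-i)`,
and for the new ratio `i = k + 1` it holds because `r (k + 1) = (k + 1) / (k + 2)` is exactly the
holding probability at `k + 1`. On the diagonal `p n n = 1 / n!`, which matches the closed form
because `∑ i, (-1)^(k-i) C(k+1, i+1) i^k` is the `(k+1)`-st forward difference of `x ↦ (x-1)^k`
at `0` minus its two first terms, that is `0 - (-1) = 1`.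
-/

open Finset

lemma sum_Icc_choose_mul_pow_eq_one {k : ℕ} (hk : 1 ≤ k) :
    ∑ i ∈ Icc 1 k, (-1 : ℝ) ^ (k - i) * ((k + 1).choose (i + 1) : ℝ) * (i : ℝ) ^ k = 1 := by
  have hΔ := congrFun (fwdDiff_iter_pow_eq_zero_of_lt (R := ℝ) (Nat.lt_succ_self k)) (-1)
  rw [fwdDiff_iter_eq_sum_shift, sum_range_succ', sum_range_succ'] at hΔ
  simp only [Int.reduceNeg, Nat.succ_eq_add_one, Nat.reduceSubDiff, nsmul_eq_mul, Nat.cast_add,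
    Nat.cast_one, mul_one, neg_add_cancel_comm_assoc, zsmul_eq_mul, Int.cast_mul, Int.cast_pow,
    Int.cast_neg, Int.cast_one, Int.cast_natCast, zero_add, add_tsub_cancel_right,
    Nat.choose_one_right, one_smul, neg_add_cancel, zero_pow (by omega : k ≠ 0), smul_zero,
    add_zero, tsub_zero, Nat.choose_zero_right, Nat.cast_zero, Pi.zero_apply] at hΔ
  have hsign : (-1 : ℝ) ^ (k + 1) * (-1) ^ k = -1 := by
    rw [← pow_add]
    exact Odd.neg_one_pow ⟨k, by ring⟩
  rw [← Ico_add_one_right_eq_Icc, sum_Ico_eq_sum_range, Nat.add_sub_cancel]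
  simp only [add_comm 1, Nat.cast_add_one]
  linarith

noncomputable def closedFormCoeff (k i : ℕ) : ℝ :=
  (-1 : ℝ) ^ (k - i) * ((k + 1).choose (i + 1) : ℝ) * (i : ℝ) ^ k / (Nat.factorial k : ℝ)

noncomputable def closedForm (k m : ℕ) : ℝ :=
  ∑ i ∈ Icc 1 k, closedFormCoeff k i * ((i : ℝ) / ((i : ℝ) + 1)) ^ m

lemma closedFormCoeff_succ_mul_ratio {k i : ℕ} (hi : i ≤ k) :
    closedFormCoeff (k + 1) i * ((i : ℝ) / (i + 1)) =
      (k + 1) / (k + 2) * closedFormCoeff (k + 1) i +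
        1 / (k + 1) * (closedFormCoeff k i * ((i : ℝ) / (i + 1))) := by
  have hchoose :
      ((k + 1).choose (i + 1) : ℝ) * (k + 2) = ((k + 1 + 1).choose (i + 1) : ℝ) * (k - i + 1) := by
    have := Nat.choose_mul_succ_eq (k + 1) (i + 1)
    rw [show k + 1 + 1 - (i + 1) = k - i + 1 by omega] at this
    exact_mod_cast this
  have hsign : (-1 : ℝ) ^ (k + 1 - i) = -(-1) ^ (k - i) := by
    rw [show k + 1 - i = k - i + 1 by omega, pow_succ, mul_neg_one]
  unfold closedFormCoeff
  rw [hsign, Nat.factorial_succ, pow_succ]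
  push_cast
  field_simp
  linear_combination (-(i : ℝ) ^ (k + 1)) * hchoose

lemma closedForm_eq (k m : ℕ) :
    closedForm k m = (1 / (Nat.factorial k : ℝ)) *
      ∑ i ∈ Icc 1 k, (-1 : ℝ) ^ (k - i) * ((k + 1).choose (i + 1) : ℝ) * (i : ℝ) ^ k *
        ((i : ℝ) / ((i : ℝ) + 1)) ^ m := by
  rw [closedForm, mul_sum]
  refine sum_congr rfl fun i _ => ?_
  rw [closedFormCoeff]
  ring

lemma closedForm_zero_left (m : ℕ) : closedForm 0 m = 0 := by
  simp [closedForm]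

lemma closedForm_zero_right {k : ℕ} (hk : 1 ≤ k) : closedForm k 0 = 1 / (Nat.factorial k : ℝ) := by
  rw [closedForm_eq]
  simp only [pow_zero, mul_one, sum_Icc_choose_mul_pow_eq_one hk]

lemma closedForm_succ_succ (k m : ℕ) :
    closedForm (k + 1) (m + 1) =
      (k + 1) / (k + 2) * closedForm (k + 1) m + 1 / (k + 1) * closedForm k (m + 1) := by
  have hlast : ((k + 1 : ℕ) : ℝ) / ((k + 1 : ℕ) + 1) = (k + 1) / (k + 2) := by push_cast; ring
  unfold closedForm
  rw [sum_Icc_succ_top (by omega), sum_Icc_succ_top (by omega), mul_add, mul_sum, mul_sum,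
    hlast, add_right_comm, ← sum_add_distrib]
  congr 1
  · refine sum_congr rfl fun i hi => ?_
    linear_combination ((i : ℝ) / (i + 1)) ^ m * closedFormCoeff_succ_mul_ratio (mem_Icc.1 hi).2
  · ring

lemma diag_eq_one_div_factorial {p : ℕ → ℕ → ℝ} (h00 : p 0 0 = 1)
    (hupper : ∀ i j : ℕ, i + 1 ≤ j → p i j = 0)
    (hrec : ∀ n k : ℕ, 1 ≤ k → k ≤ n + 1 →
      p (n + 1) k = ((k : ℝ) / ((k : ℝ) + 1)) * p n k + (1 / (k : ℝ)) * p n (k - 1))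
    (n : ℕ) : p n n = 1 / (Nat.factorial n : ℝ) := by
  induction n with
  | zero => simp [h00]
  | succ n ih =>
    rw [hrec n (n + 1) (by omega) le_rfl, hupper n (n + 1) le_rfl, Nat.add_sub_cancel, ih,
      Nat.factorial_succ]
    push_cast
    field_simp
    ring

/-- Closed form for the distribution of the subordinated chain with transition
probabilities `p_{k,k+1} = 1/(1+k)`, `p_{k,k} = k/(k+1)`, started at `0`. -/
theorem stmt_2 (p : ℕ → ℕ → ℝ)
    (h00 : p 0 0 = 1)
    (hn0 : ∀ n : ℕ, 1 ≤ n → p n 0 = 0)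
    (hupper : ∀ i j : ℕ, i + 1 ≤ j → p i j = 0)
    (hrec : ∀ n k : ℕ, 1 ≤ k → k ≤ n + 1 →
      p (n + 1) k = ((k : ℝ) / ((k : ℝ) + 1)) * p n k + (1 / (k : ℝ)) * p n (k - 1)) :
    ∀ n k : ℕ, 1 ≤ k → k ≤ n →
      p n k = (1 / (Nat.factorial k : ℝ)) *
        ∑ i ∈ Finset.Icc 1 k,
          (-1 : ℝ) ^ (k - i) * ((k + 1).choose (i + 1) : ℝ) * (i : ℝ) ^ k *
            ((i : ℝ) / ((i : ℝ) + 1)) ^ (n - k) := by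
  simp_rw [← closedForm_eq]
  intro n
  induction n with
  | zero => intro k hk hkn; omega
  | succ n ih =>
    intro k hk hkn
    obtain rfl | hkn := eq_or_lt_of_le hkn
    · rw [Nat.sub_self, closedForm_zero_right hk,
        diag_eq_one_div_factorial h00 hupper hrec]
    obtain ⟨k, rfl⟩ := Nat.exists_eq_add_of_le' hk
    have hprev : p n k = closedForm k (n - k) := by
      rcases k.eq_zero_or_pos with rfl | hk0
      · rw [hn0 n (by omega), closedForm_zero_left]
      · exact ih k hk0 (by omega)
    rw [hrec n (k + 1) hk (by omega), ih (k + 1) hk (by omega), Nat.add_sub_cancel, hprev,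
      show n + 1 - (k + 1) = n - (k + 1) + 1 by omega, show n - k = n - (k + 1) + 1 by omega,
      closedForm_succ_succ]
    push_cast
    ring
end

section
/- For each n ≥ 0, the values p_{n,k} = (1/k!) · Σ_{i=1}^{k} (-1)^{k-i} · C(k+1, i+1) · i^k · (i/(i+1))^{n-k} for 1 ≤ k ≤ n (together with p_{0,0} = 1 and p_{n,0} = 0 for n ≥ 1) are nonnegative and sum to 1 over k. -/
/-!
The chain's distribution obeys the forward equation
`p (n+1) (k+1) = p n (k+1) * (k+1)/(k+2) + p n k / (k+1)`, from which it is visibly a probability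
vector. The closed form obeys the same equation termwise in `i`, because
`(k+1-i) * C(k+2, i+1) = (k+2) * C(k+1, i+1)`, and on the diagonal it equals `1/k!`, because the
`(k+1)`-st forward difference of `x ↦ x ^ k` at `-1` vanishes while its terms at `x = -1` and
`x = 0` are `-1` and `0`. So the closed form is the distribution of the chain.
-/

open Finset

/-- Closed-form values of the `n`-step distribution of the chain with
`p_{k,k+1} = 1/(1+k)`, `p_{k,k} = k/(k+1)`, started at `0`. -/
noncomputable def chainP (n k : ℕ) : ℝ :=
  if k = 0 then (if n = 0 then 1 else 0)
  else (1 / (Nat.factorial k : ℝ)) *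
    ∑ i ∈ Finset.Icc 1 k,
      (-1 : ℝ) ^ (k - i) * ((k + 1).choose (i + 1) : ℝ) * (i : ℝ) ^ k *
        ((i : ℝ) / ((i : ℝ) + 1)) ^ (n - k)

noncomputable def chainDist : ℕ → ℕ → ℝ
  | 0, k => if k = 0 then 1 else 0
  | _ + 1, 0 => 0
  | n + 1, k + 1 => chainDist n (k + 1) * ((k + 1) / (k + 2)) + chainDist n k / (k + 1)

theorem chainDist_nonneg (n k : ℕ) : 0 ≤ chainDist n k := by
  induction n generalizing k with
  | zero => unfold chainDist; split_ifs <;> norm_num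
  | succ n ih =>
    cases k with
    | zero => exact le_rfl
    | succ k => unfold chainDist; have := ih k; have := ih (k + 1); positivity

theorem chainDist_eq_zero_of_lt {n k : ℕ} (h : n < k) : chainDist n k = 0 := by
  induction n generalizing k with
  | zero => simp [chainDist, Nat.pos_iff_ne_zero.mp h]
  | succ n ih =>
    obtain ⟨k, rfl⟩ := Nat.exists_eq_add_one_of_ne_zero (by omega : k ≠ 0)
    simp [chainDist, ih (by omega : n < k + 1), ih (by omega : n < k)]

theorem chainDist_self (k : ℕ) : chainDist k k = 1 / k.factorial := by
  induction k with
  | zero => simp [chainDist]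
  | succ k ih =>
    rw [chainDist, chainDist_eq_zero_of_lt (Nat.lt_succ_self k), ih, Nat.factorial_succ]
    push_cast
    field_simp
    ring

theorem sum_range_chainDist (n : ℕ) : ∑ k ∈ range (n + 1), chainDist n k = 1 := by
  induction n with
  | zero => simp [chainDist]
  | succ n ih =>
    have hshift : ∑ k ∈ range (n + 1), chainDist n (k + 1) * ((k + 1) / (k + 2))
        = ∑ k ∈ range (n + 1), chainDist n k * (k / (k + 1)) := by
      have h := sum_range_succ' (fun k : ℕ ↦ chainDist n k * (k / (k + 1))) (n + 1)
      rw [sum_range_succ, chainDist_eq_zero_of_lt (Nat.lt_succ_self n)] at h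
      simpa [add_assoc, one_add_one_eq_two] using h.symm
    rw [sum_range_succ', chainDist, add_zero]
    simp only [chainDist]
    rw [sum_add_distrib, hshift, ← sum_add_distrib]
    refine (sum_congr rfl fun k _ ↦ ?_).trans ih
    field_simp

theorem sum_Icc_one_eq_sum_range {M : Type*} [AddCommMonoid M] (f : ℕ → M) (k : ℕ) :
    ∑ i ∈ Icc 1 k, f i = ∑ m ∈ range k, f (m + 1) := by
  rw [← Ico_add_one_right_eq_Icc, sum_Ico_eq_sum_range, add_tsub_cancel_right]
  simp only [add_comm 1]

theorem sum_Icc_neg_one_pow_mul_choose_mul_pow {k : ℕ} (hk : k ≠ 0) :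
    ∑ i ∈ Icc 1 k, (-1 : ℝ) ^ (k - i) * ((k + 1).choose (i + 1) : ℝ) * (i : ℝ) ^ k
      = 1 := by
  have h := congrFun (fwdDiff_iter_pow_eq_zero_of_lt (R := ℝ) (Nat.lt_succ_self k)) (-1)
  rw [fwdDiff_iter_eq_sum_shift, sum_range_succ', sum_range_succ'] at h
  simp only [Int.reduceNeg, Nat.succ_eq_add_one, Nat.reduceSubDiff, nsmul_eq_mul, Nat.cast_add,
    Nat.cast_one, mul_one, neg_add_cancel_comm_assoc, zsmul_eq_mul, Int.cast_mul, Int.cast_pow,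
    Int.cast_neg, Int.cast_one, Int.cast_natCast, zero_add, add_tsub_cancel_right,
    Nat.choose_one_right, one_smul, neg_add_cancel, zero_pow hk, smul_zero, add_zero, tsub_zero,
    Nat.choose_zero_right, Nat.cast_zero, Pi.zero_apply] at h
  rw [← pow_add, Odd.neg_one_pow ⟨k, by ring⟩] at h
  rw [sum_Icc_one_eq_sum_range]
  push_cast
  linarith

noncomputable def chainCoeff (k i : ℕ) : ℝ :=
  (-1 : ℝ) ^ (k - i) * ((k + 1).choose (i + 1) : ℝ) * (i : ℝ) ^ k

theorem chainCoeff_succ_self (k : ℕ) : chainCoeff k (k + 1) = 0 := by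
  simp [chainCoeff, Nat.choose_succ_self]

theorem chainCoeff_succ_mul {k i : ℕ} (hi : i ≤ k + 1) :
    chainCoeff (k + 1) i * (i - (k + 1)) = (k + 2) * i * chainCoeff k i := by
  rcases hi.lt_or_eq with hi | rfl
  · have hchoose :
        ((k + 1).choose (i + 1) : ℝ) * (k + 2) = (k + 2).choose (i + 1) * (k + 1 - i) := by
      have h := Nat.choose_mul_succ_eq (k + 1) (i + 1)
      rw [show k + 1 + 1 - (i + 1) = k + 1 - i by omega] at h
      have h' := congrArg (Nat.cast : ℕ → ℝ) h
      push_cast [Nat.cast_sub hi.le] at h'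
      linear_combination h'
    rw [chainCoeff, chainCoeff, show k + 1 - i = k - i + 1 by omega, pow_succ, pow_succ]
    linear_combination (-(-1 : ℝ) ^ (k - i) * (i : ℝ) ^ k * i) * hchoose
  · simp [chainCoeff_succ_self]

theorem chainP_eq_sum {n k : ℕ} (h : k ≠ 0 ∨ n ≠ 0) :
    chainP n k = 1 / k.factorial *
      ∑ i ∈ Icc 1 k, chainCoeff k i * ((i : ℝ) / ((i : ℝ) + 1)) ^ (n - k) := by
  unfold chainP chainCoeff
  split_ifs <;> simp_all

theorem chainP_self (k : ℕ) : chainP k k = 1 / k.factorial := by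
  rcases eq_or_ne k 0 with rfl | hk
  · simp [chainP]
  · simp [chainP_eq_sum (Or.inl hk), chainCoeff, sum_Icc_neg_one_pow_mul_choose_mul_pow hk]

theorem chainP_succ_succ {n k : ℕ} (hk : k + 1 ≤ n) :
    chainP (n + 1) (k + 1) = chainP n (k + 1) * ((k + 1) / (k + 2)) + chainP n k / (k + 1) := by
  obtain ⟨m, rfl⟩ := Nat.exists_eq_add_of_le hk
  rw [chainP_eq_sum (Or.inl k.succ_ne_zero), chainP_eq_sum (Or.inl k.succ_ne_zero),
    chainP_eq_sum (Or.inr (by omega)), show k + 1 + m + 1 - (k + 1) = m + 1 by omega,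
    show k + 1 + m - (k + 1) = m by omega, show k + 1 + m - k = m + 1 by omega]
  have hext : ∑ i ∈ Icc 1 k, chainCoeff k i * ((i : ℝ) / (i + 1)) ^ (m + 1)
      = ∑ i ∈ Icc 1 (k + 1), chainCoeff k i * ((i : ℝ) / (i + 1)) ^ (m + 1) := by
    rw [sum_Icc_succ_top (by omega), chainCoeff_succ_self, zero_mul, add_zero]
  have hterm : ∀ i ∈ Icc 1 (k + 1), chainCoeff (k + 1) i * ((i : ℝ) / (i + 1)) ^ (m + 1)
      = chainCoeff (k + 1) i * ((i : ℝ) / (i + 1)) ^ m * ((k + 1) / (k + 2))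
        + chainCoeff k i * ((i : ℝ) / (i + 1)) ^ (m + 1) := by
    intro i hi
    have h := chainCoeff_succ_mul (mem_Icc.mp hi).2
    rw [pow_succ]
    field_simp
    linear_combination ((i : ℝ) / (i + 1)) ^ m * h
  rw [hext, sum_congr rfl hterm, sum_add_distrib, ← sum_mul, Nat.factorial_succ]
  push_cast
  field_simp

theorem chainP_eq_chainDist {n k : ℕ} (hk : k ≤ n) : chainP n k = chainDist n k := by
  induction n generalizing k with
  | zero => simp [Nat.le_zero.mp hk, chainP, chainDist]
  | succ n ih =>
    rcases k with _ | k
    · simp [chainP, chainDist]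
    rcases hk.lt_or_eq with hk | hk
    · rw [chainP_succ_succ (by omega), ih (by omega), ih (by omega), chainDist]
    · cases hk
      rw [chainP_self, chainDist_self]

/-- For each `n`, the values `p_{n,k}` (for `0 ≤ k ≤ n`) are nonnegative and sum to `1`. -/
theorem stmt_3 (n : ℕ) :
    (∀ k : ℕ, k ≤ n → 0 ≤ chainP n k) ∧
    (∑ k ∈ Finset.range (n + 1), chainP n k = 1) := by
  refine ⟨fun k hk ↦ chainP_eq_chainDist hk ▸ chainDist_nonneg n k, ?_⟩
  rw [sum_congr rfl fun k hk ↦ chainP_eq_chainDist (Nat.lt_succ_iff.mp (mem_range.mp hk))]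
  exact sum_range_chainDist n
end

section
/- Let X_n be the chain with p_{k,k+1} = 1/(1+k), p_{k,k} = k/(k+1), X_0 = 0, and let μ_n = E(X_n) = (-1+√(1+8n))/2. Then for all 0 < ε < 1: P(X_n ≥ (1+ε)μ_n) ≤ exp(-ε²μ_n/3) and P(X_n ≤ (1-ε)μ_n) ≤ exp(-ε²μ_n/3). -/
/-!
Exponential-moment method with product test functions adapted to the chain. For `s ≥ 0` the
weight `F(k) = ∏_{j ≤ k} (1 + s j)` satisfies `E[F(X_{n+1}) | X_n] = (1 + s) F(X_n)`, so
`E F(X_n) = (1 + s)^n ≤ e^{sn}`; Markov's inequality and `log (1 + x) ≥ x - x²/2` give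
`P(X_n ≥ a) ≤ exp(-W²/(2Q))` with `W = a(a+1)/2 - n`, `Q = ∑_{j ≤ a} j²` at `s = W/Q`.
Symmetrically `G(k) = ∏_{j ≤ k} (1 - s j)` has `E G(X_n) ≤ (1 - s)^n`, and `s = ε/μ` handles the
lower tail. Since `μ² + μ = 2n`, both exponents reduce to polynomial inequalities in `μ`, `ε`, `a`.
-/

open Finset Real

theorem exp_sub_sq_div_two_le_one_add {x : ℝ} (hx : 0 ≤ x) : exp (x - x ^ 2 / 2) ≤ 1 + x := by
  rcases le_total x 1 with hx1 | hx1
  · have hcubic : exp x ≤ 1 + x + x ^ 2 / 2 + x ^ 3 * (2 / 9) := by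
      have h := exp_bound' hx hx1 (n := 3) (by norm_num)
      norm_num [sum_range_succ, Nat.factorial] at h
      linarith
    have hsq : 1 + x ^ 2 / 2 ≤ exp (x ^ 2 / 2) := by linarith [add_one_le_exp (x ^ 2 / 2)]
    refine le_of_mul_le_mul_right ?_ (by positivity : (0 : ℝ) < 1 + x ^ 2 / 2)
    calc exp (x - x ^ 2 / 2) * (1 + x ^ 2 / 2) ≤ exp (x - x ^ 2 / 2) * exp (x ^ 2 / 2) := by
          gcongr
      _ = exp x := by rw [← exp_add]; ring_nf
      _ ≤ (1 + x) * (1 + x ^ 2 / 2) := by nlinarith [pow_nonneg hx 3]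
  · have hhalf : exp (1 / 2) ≤ 2 := by
      have h := exp_one_lt_d9
      rw [show (1 : ℝ) = 1 / 2 + 1 / 2 by norm_num, exp_add] at h
      nlinarith [exp_pos (1 / 2)]
    calc exp (x - x ^ 2 / 2) ≤ exp (1 / 2) := exp_le_exp.mpr (by nlinarith [sq_nonneg (x - 1)])
      _ ≤ 1 + x := by linarith

theorem exp_neg_sub_le_one_sub {x : ℝ} (hx : 0 ≤ x) (hx4 : x ≤ 1 / 4) :
    exp (-x - 2 / 3 * x ^ 2) ≤ 1 - x := by
  set y := x + 2 / 3 * x ^ 2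
  have hy : 0 ≤ y := by positivity
  have hexp : 1 + y + y ^ 2 / 2 ≤ exp y := quadratic_le_exp_of_nonneg hy
  have hpoly : 1 ≤ (1 - x) * (1 + y + y ^ 2 / 2) := by
    simp only [y]; nlinarith [pow_nonneg hx 3, pow_nonneg hx 4, pow_nonneg hx 5]
  rw [show -x - 2 / 3 * x ^ 2 = -y by ring, exp_neg, inv_le_iff_one_le_mul₀ (exp_pos y)]
  nlinarith

theorem sum_Ioc_cast_id (a : ℕ) : ∑ j ∈ Ioc 0 a, (j : ℝ) = a * (a + 1) / 2 := by
  induction a with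
  | zero => simp
  | succ b ih => rw [sum_Ioc_succ_top (Nat.zero_le b), ih]; push_cast; ring

theorem sum_Ioc_cast_sq (a : ℕ) :
    ∑ j ∈ Ioc 0 a, (j : ℝ) ^ 2 = a * (a + 1) * (2 * a + 1) / 6 := by
  induction a with
  | zero => simp
  | succ b ih => rw [sum_Ioc_succ_top (Nat.zero_le b), ih]; push_cast; ring

theorem sum_filter_le_sum_mul_div {ι : Type*} (s : Finset ι) (P : ι → Prop) [DecidablePred P]
    {w f : ι → ℝ} {t : ℝ} (hw : ∀ i ∈ s, 0 ≤ w i) (hf : ∀ i ∈ s, 0 ≤ f i) (ht : 0 < t)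
    (hP : ∀ i ∈ s, P i → t ≤ f i) :
    ∑ i ∈ s.filter P, w i ≤ (∑ i ∈ s, w i * f i) / t := by
  rw [le_div_iff₀ ht, sum_mul]
  calc ∑ i ∈ s.filter P, w i * t ≤ ∑ i ∈ s.filter P, w i * f i := by
        refine sum_le_sum fun i hi => ?_
        rw [mem_filter] at hi
        exact mul_le_mul_of_nonneg_left (hP i hi.1 hi.2) (hw i hi.1)
    _ ≤ ∑ i ∈ s, w i * f i :=
        sum_le_sum_of_subset_of_nonneg (filter_subset _ _)
          fun i hi _ => mul_nonneg (hw i hi) (hf i hi)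

theorem upper_tail_exponent_bound {μ ε A : ℝ} (hμ : 1 ≤ μ) (hε0 : 0 < ε) (hε1 : ε < 1)
    (hA : (1 + ε) * μ ≤ A) (hA' : A ≤ (1 + ε) * μ + 1) :
    4 * ε ^ 2 * μ * (A * (A + 1) * (2 * A + 1)) ≤ 9 * (A - μ) ^ 2 * (A + μ + 1) ^ 2 := by
  have hd : ε * μ ≤ A - μ := by linarith
  have hεμ : 0 ≤ ε * μ := by positivity
  rcases le_total A (2 * μ) with hA2 | hA2
  · have hcubic : 4 * (A * (A + 1) * (2 * A + 1)) ≤ 9 * μ * (A + μ + 1) ^ 2 := by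
      nlinarith [mul_nonneg (sub_nonneg.mpr hA2) (sub_nonneg.mpr hμ), sq_nonneg (A - 2 * μ),
        mul_nonneg (sub_nonneg.mpr hA2) (sq_nonneg A)]
    calc 4 * ε ^ 2 * μ * (A * (A + 1) * (2 * A + 1))
        = ε ^ 2 * μ * (4 * (A * (A + 1) * (2 * A + 1))) := by ring
      _ ≤ ε ^ 2 * μ * (9 * μ * (A + μ + 1) ^ 2) := by gcongr
      _ = 9 * (ε * μ) ^ 2 * (A + μ + 1) ^ 2 := by ring
      _ ≤ 9 * (A - μ) ^ 2 * (A + μ + 1) ^ 2 := by gcongr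
  · have hA2' : A ≤ 2 * μ + 1 := by nlinarith
    have hquartic : 4 * μ * (A * (A + 1) * (2 * A + 1)) ≤ 9 * (A - μ) ^ 2 * (A + μ + 1) ^ 2 := by
      nlinarith [mul_nonneg (sub_nonneg.mpr hA2) (sub_nonneg.mpr hμ), sq_nonneg (A - 2 * μ),
        mul_nonneg (sub_nonneg.mpr hA2') (sub_nonneg.mpr hμ), sq_nonneg (A + μ + 1),
        mul_nonneg (sub_nonneg.mpr hA2) (sub_nonneg.mpr hA2')]
    have hX : 0 ≤ 4 * μ * (A * (A + 1) * (2 * A + 1)) :=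
      mul_nonneg (by linarith) (mul_nonneg (mul_nonneg (by linarith) (by linarith)) (by linarith))
    have hε2 : ε ^ 2 ≤ 1 := by nlinarith
    calc 4 * ε ^ 2 * μ * (A * (A + 1) * (2 * A + 1))
        = ε ^ 2 * (4 * μ * (A * (A + 1) * (2 * A + 1))) := by ring
      _ ≤ 4 * μ * (A * (A + 1) * (2 * A + 1)) := mul_le_of_le_one_left hX hε2
      _ ≤ 9 * (A - μ) ^ 2 * (A + μ + 1) ^ 2 := hquartic

theorem lower_tail_exponent_bound {μ ε A : ℝ} (hμ : 1 ≤ μ) (hε : 0 ≤ ε) (hA0 : 0 ≤ A)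
    (hA : A ≤ (1 - ε) * μ) :
    ε * (6 * μ ^ 3 + 2 * (A * (A + 1) * (2 * A + 1))) ≤ 9 * μ * ((μ - A) * (μ + A + 1)) := by
  have hAμ : A ≤ μ := by nlinarith
  have hcubic : 6 * μ ^ 3 + 2 * (A * (A + 1) * (2 * A + 1)) ≤ 9 * μ ^ 2 * (μ + A + 1) := by
    nlinarith [mul_nonneg hA0 (sub_nonneg.mpr hAμ), sq_nonneg (μ - A),
      mul_nonneg (mul_nonneg hA0 hA0) (sub_nonneg.mpr hAμ),
      mul_nonneg (sub_nonneg.mpr hAμ) (sub_nonneg.mpr hμ)]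
  calc ε * (6 * μ ^ 3 + 2 * (A * (A + 1) * (2 * A + 1))) ≤ ε * (9 * μ ^ 2 * (μ + A + 1)) := by
        gcongr
    _ = 9 * μ * ((ε * μ) * (μ + A + 1)) := by ring
    _ ≤ 9 * μ * ((μ - A) * (μ + A + 1)) := by gcongr; linarith

noncomputable def upperWeight (s : ℝ) (k : ℕ) : ℝ := ∏ j ∈ Ioc 0 k, (1 + s * j)

theorem upperWeight_zero (s : ℝ) : upperWeight s 0 = 1 := by simp [upperWeight]

theorem upperWeight_succ (s : ℝ) (k : ℕ) :
    upperWeight s (k + 1) = upperWeight s k * (1 + s * (k + 1)) := by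
  rw [upperWeight, upperWeight, prod_Ioc_succ_top (Nat.zero_le k)]; push_cast; rfl

theorem one_le_upperWeight {s : ℝ} (hs : 0 ≤ s) (k : ℕ) : 1 ≤ upperWeight s k := by
  induction k with
  | zero => rw [upperWeight_zero]
  | succ k ih =>
    rw [upperWeight_succ]
    exact one_le_mul_of_one_le_of_one_le ih (by have : (0 : ℝ) ≤ k := k.cast_nonneg; nlinarith)

theorem upperWeight_mono {s : ℝ} (hs : 0 ≤ s) : Monotone (upperWeight s) :=
  monotone_nat_of_le_succ fun k => by
    rw [upperWeight_succ]
    exact le_mul_of_one_le_right (zero_le_one.trans (one_le_upperWeight hs k))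
      (by have : (0 : ℝ) ≤ k := k.cast_nonneg; nlinarith)

theorem upperWeight_drift (s : ℝ) (k : ℕ) :
    k / (k + 1) * upperWeight s k + 1 / (k + 1) * upperWeight s (k + 1) =
      (1 + s) * upperWeight s k := by
  rw [upperWeight_succ]; field_simp; ring

theorem exp_le_upperWeight {s : ℝ} (hs : 0 ≤ s) (a : ℕ) :
    exp (s * ∑ j ∈ Ioc 0 a, (j : ℝ) - s ^ 2 / 2 * ∑ j ∈ Ioc 0 a, (j : ℝ) ^ 2) ≤
      upperWeight s a := by
  rw [mul_sum, mul_sum, ← sum_sub_distrib, exp_sum, upperWeight]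
  refine prod_le_prod (fun _ _ => (exp_pos _).le) fun j _ => ?_
  rw [show s * j - s ^ 2 / 2 * j ^ 2 = s * j - (s * j) ^ 2 / 2 by ring]
  exact exp_sub_sq_div_two_le_one_add (by positivity)

/-- The factor `1 - s j` is cut to `0` one step early, which keeps the weight nonnegative without
breaking its drift inequality. -/
noncomputable def lowerWeight (s : ℝ) (k : ℕ) : ℝ :=
  ∏ j ∈ Ioc 0 k, if s * (j + 1) ≤ 1 then 1 - s * j else 0

theorem lowerWeight_zero (s : ℝ) : lowerWeight s 0 = 1 := by simp [lowerWeight]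

theorem lowerWeight_succ (s : ℝ) (k : ℕ) :
    lowerWeight s (k + 1) =
      lowerWeight s k * if s * (k + 1 + 1) ≤ 1 then 1 - s * (k + 1) else 0 := by
  rw [lowerWeight, lowerWeight, prod_Ioc_succ_top (Nat.zero_le k)]; push_cast; rfl

theorem lowerWeight_nonneg {s : ℝ} (hs : 0 ≤ s) (k : ℕ) : 0 ≤ lowerWeight s k := by
  refine prod_nonneg fun j _ => ?_
  split_ifs with h
  · nlinarith
  · exact le_rfl

theorem lowerWeight_antitone {s : ℝ} (hs : 0 ≤ s) : Antitone (lowerWeight s) :=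
  antitone_nat_of_succ_le fun k => by
    rw [lowerWeight_succ]
    refine mul_le_of_le_one_right (lowerWeight_nonneg hs k) ?_
    split_ifs
    · have : (0 : ℝ) ≤ k := k.cast_nonneg
      nlinarith
    · exact zero_le_one

theorem lowerWeight_drift_le {s : ℝ} (hs : 0 ≤ s) (hs1 : s ≤ 1) (k : ℕ) :
    k / (k + 1) * lowerWeight s k + 1 / (k + 1) * lowerWeight s (k + 1) ≤
      (1 - s) * lowerWeight s k := by
  by_cases hk : s * (k + 1) ≤ 1
  · rw [lowerWeight_succ]
    split_ifs with hk'
    · exact le_of_eq (by field_simp; ring)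
    · rw [mul_zero, mul_zero, add_zero]
      refine mul_le_mul_of_nonneg_right ?_ (lowerWeight_nonneg hs k)
      rw [div_le_iff₀ (by positivity)]; nlinarith
  · have hk1 : 1 ≤ k := by
      by_contra h
      obtain rfl : k = 0 := by omega
      exact hk (by simpa using hs1)
    have hzero : lowerWeight s k = 0 :=
      prod_eq_zero (mem_Ioc.mpr ⟨hk1, le_rfl⟩) (if_neg hk)
    simp [lowerWeight_succ, hzero]

theorem exp_le_lowerWeight {s : ℝ} (hs : 0 ≤ s) {a : ℕ} (ha : s * (a + 1) ≤ 1)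
    (ha' : s * a ≤ 1 / 4) :
    exp (-(s * ∑ j ∈ Ioc 0 a, (j : ℝ)) - 2 / 3 * s ^ 2 * ∑ j ∈ Ioc 0 a, (j : ℝ) ^ 2) ≤
      lowerWeight s a := by
  rw [mul_sum, mul_sum, ← sum_neg_distrib, ← sum_sub_distrib, exp_sum, lowerWeight]
  refine prod_le_prod (fun _ _ => (exp_pos _).le) fun j hj => ?_
  have hja : (j : ℝ) ≤ a := by exact_mod_cast (mem_Ioc.mp hj).2
  rw [if_pos (by nlinarith), show -(s * j) - 2 / 3 * s ^ 2 * j ^ 2 = -(s * j) - 2 / 3 * (s * j) ^ 2 by ring]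
  exact exp_neg_sub_le_one_sub (by positivity) (by nlinarith)

/-- `p n k = P(X_n = k)`, given through the forward equation of the chain. -/
structure IsChainDistrib (p : ℕ → ℕ → ℝ) : Prop where
  init : p 0 0 = 1
  zero_of_pos : ∀ n : ℕ, 1 ≤ n → p n 0 = 0
  eq_zero_of_lt : ∀ i j : ℕ, i + 1 ≤ j → p i j = 0
  forward : ∀ n k : ℕ, 1 ≤ k → k ≤ n + 1 →
    p (n + 1) k = ((k : ℝ) / ((k : ℝ) + 1)) * p n k + (1 / (k : ℝ)) * p n (k - 1)

namespace IsChainDistrib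

variable {p : ℕ → ℕ → ℝ}

theorem nonneg (hp : IsChainDistrib p) (n k : ℕ) : 0 ≤ p n k := by
  induction n generalizing k with
  | zero =>
    rcases k with _ | k
    · simp [hp.init]
    · simp [hp.eq_zero_of_lt 0 (k + 1) (by omega)]
  | succ n ih =>
    rcases k with _ | k
    · simp [hp.zero_of_pos (n + 1) (by omega)]
    · by_cases hk : k + 1 ≤ n + 1
      · rw [hp.forward n (k + 1) (by omega) hk]
        exact add_nonneg (mul_nonneg (by positivity) (ih _)) (mul_nonneg (by positivity) (ih _))
      · simp [hp.eq_zero_of_lt (n + 1) (k + 1) (by omega)]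

/-- `E f(X_{n+1}) = E (T f)(X_n)` for the transition operator `T` of the chain. -/
theorem sum_range_succ_mul (hp : IsChainDistrib p) (f : ℕ → ℝ) (n : ℕ) :
    ∑ k ∈ range (n + 2), p (n + 1) k * f k =
      ∑ k ∈ range (n + 1), p n k * (k / (k + 1) * f k + 1 / (k + 1) * f (k + 1)) := by
  set g : ℕ → ℝ := fun k => k / (k + 1) * p n k * f k
  have hshift : ∑ k ∈ range (n + 1), g (k + 1) = ∑ k ∈ range (n + 1), g k := by
    have h₁ := sum_range_succ' g (n + 1)
    have h₂ := sum_range_succ g (n + 1)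
    simp only [g, hp.eq_zero_of_lt n (n + 1) le_rfl, CharP.cast_eq_zero, zero_div, zero_mul,
      mul_zero, add_zero] at h₁ h₂
    linarith
  rw [sum_range_succ', hp.zero_of_pos (n + 1) (by omega), zero_mul, add_zero]
  calc ∑ k ∈ range (n + 1), p (n + 1) (k + 1) * f (k + 1)
      = ∑ k ∈ range (n + 1), (g (k + 1) + p n k * (1 / (k + 1) * f (k + 1))) := by
        refine sum_congr rfl fun k hk => ?_
        rw [hp.forward n (k + 1) (by omega) (by rw [mem_range] at hk; omega)]
        simp only [g]; push_cast; ring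
    _ = ∑ k ∈ range (n + 1), p n k * (k / (k + 1) * f k + 1 / (k + 1) * f (k + 1)) := by
        rw [sum_add_distrib, hshift, ← sum_add_distrib]
        refine sum_congr rfl fun k _ => ?_
        simp only [g]; ring

theorem sum_mul_le_pow_mul (hp : IsChainDistrib p) {f : ℕ → ℝ} {c : ℝ} (hc : 0 ≤ c)
    (hf : ∀ k : ℕ, k / (k + 1) * f k + 1 / (k + 1) * f (k + 1) ≤ c * f k) (n : ℕ) :
    ∑ k ∈ range (n + 1), p n k * f k ≤ c ^ n * f 0 := by
  induction n with
  | zero => simp [hp.init]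
  | succ n ih =>
    calc ∑ k ∈ range (n + 2), p (n + 1) k * f k
        = ∑ k ∈ range (n + 1), p n k * (k / (k + 1) * f k + 1 / (k + 1) * f (k + 1)) :=
          hp.sum_range_succ_mul f n
      _ ≤ ∑ k ∈ range (n + 1), p n k * (c * f k) :=
          sum_le_sum fun k _ => mul_le_mul_of_nonneg_left (hf k) (hp.nonneg n k)
      _ = c * ∑ k ∈ range (n + 1), p n k * f k := by
          rw [mul_sum]; exact sum_congr rfl fun k _ => by ring
      _ ≤ c * (c ^ n * f 0) := mul_le_mul_of_nonneg_left ih hc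
      _ = c ^ (n + 1) * f 0 := by ring

theorem sum_filter_le_one (hp : IsChainDistrib p) (P : ℕ → Prop) [DecidablePred P] (n : ℕ) :
    ∑ k ∈ (range (n + 1)).filter P, p n k ≤ 1 := by
  have htotal := hp.sum_mul_le_pow_mul (f := fun _ => 1) zero_le_one
    (fun k => by field_simp; rfl) n
  simp only [mul_one, one_pow] at htotal
  exact (sum_le_sum_of_subset_of_nonneg (filter_subset _ _)
    fun k _ _ => hp.nonneg n k).trans htotal

theorem sum_filter_le_pow_mul_div (hp : IsChainDistrib p) (P : ℕ → Prop) [DecidablePred P]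
    {f : ℕ → ℝ} {c t : ℝ} (hc : 0 ≤ c) (hf₀ : ∀ k, 0 ≤ f k)
    (hf : ∀ k : ℕ, k / (k + 1) * f k + 1 / (k + 1) * f (k + 1) ≤ c * f k)
    (ht : 0 < t) (hP : ∀ k, P k → t ≤ f k) (n : ℕ) :
    ∑ k ∈ (range (n + 1)).filter P, p n k ≤ c ^ n * f 0 / t :=
  (sum_filter_le_sum_mul_div _ P (fun k _ => hp.nonneg n k) (fun k _ => hf₀ k) ht
    fun k _ => hP k).trans (div_le_div_of_nonneg_right (hp.sum_mul_le_pow_mul hc hf n) ht.le)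

theorem upper_tail_le (hp : IsChainDistrib p) {n : ℕ} {μ ε : ℝ} (hμ : 1 ≤ μ)
    (hμn : μ ^ 2 + μ = 2 * n) (hε0 : 0 < ε) (hε1 : ε < 1) :
    ∑ k ∈ (range (n + 1)).filter (fun k : ℕ => (1 + ε) * μ ≤ k), p n k ≤
      exp (-(ε ^ 2 * μ) / 3) := by
  set a := ⌈(1 + ε) * μ⌉₊
  have ha : (1 + ε) * μ ≤ a := Nat.le_ceil _
  have ha' : (a : ℝ) ≤ (1 + ε) * μ + 1 := (Nat.ceil_lt_add_one (by positivity)).le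
  set P := ∑ j ∈ Ioc 0 a, (j : ℝ) with hP
  set Q := ∑ j ∈ Ioc 0 a, (j : ℝ) ^ 2 with hQ
  rw [sum_Ioc_cast_id] at hP
  rw [sum_Ioc_cast_sq] at hQ
  have ha0 : (0 : ℝ) < a := by nlinarith
  have hQ0 : 0 < Q := by rw [hQ]; positivity
  have hW : P - n = (a - μ) * (a + μ + 1) / 2 := by rw [hP]; linarith
  have hW0 : 0 ≤ P - n := by
    rw [hW]; exact div_nonneg (mul_nonneg (by nlinarith) (by linarith)) zero_le_two
  -- the minimiser of the quadratic exponent `-s (P - n) + s² Q / 2`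
  set s := (P - n) / Q
  have hs : 0 ≤ s := div_nonneg hW0 hQ0.le
  calc ∑ k ∈ (range (n + 1)).filter (fun k : ℕ => (1 + ε) * μ ≤ k), p n k
      ≤ (1 + s) ^ n * upperWeight s 0 / upperWeight s a :=
        hp.sum_filter_le_pow_mul_div _ (by linarith)
          (fun k => zero_le_one.trans (one_le_upperWeight hs k))
          (fun k => (upperWeight_drift s k).le) (zero_lt_one.trans_le (one_le_upperWeight hs a))
          (fun k hk => upperWeight_mono hs (Nat.ceil_le.mpr hk)) n
    _ ≤ exp (n * s) / exp (s * P - s ^ 2 / 2 * Q) := by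
        rw [upperWeight_zero, mul_one, exp_nat_mul]
        gcongr
        · rw [add_comm]; exact add_one_le_exp s
        · exact exp_le_upperWeight hs a
    _ = exp (-((P - n) ^ 2 / (2 * Q))) := by
        rw [← exp_sub]; congr 1; simp only [s]; field_simp; ring
    _ ≤ exp (-(ε ^ 2 * μ) / 3) := by
        rw [exp_le_exp, neg_div, neg_le_neg_iff, div_le_div_iff₀ (by norm_num) (by positivity),
          hW, hQ]
        nlinarith [upper_tail_exponent_bound hμ hε0 hε1 ha ha']

theorem lower_tail_le (hp : IsChainDistrib p) {n : ℕ} {μ ε : ℝ} (hμ : 1 ≤ μ)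
    (hμn : μ ^ 2 + μ = 2 * n) (hε0 : 0 < ε) (hε1 : ε < 1) :
    ∑ k ∈ (range (n + 1)).filter (fun k : ℕ => (k : ℝ) ≤ (1 - ε) * μ), p n k ≤
      exp (-(ε ^ 2 * μ) / 3) := by
  set a := ⌊(1 - ε) * μ⌋₊
  have ha : (a : ℝ) ≤ (1 - ε) * μ := Nat.floor_le (by nlinarith)
  set P := ∑ j ∈ Ioc 0 a, (j : ℝ) with hP
  set Q := ∑ j ∈ Ioc 0 a, (j : ℝ) ^ 2 with hQ
  rw [sum_Ioc_cast_id] at hP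
  rw [sum_Ioc_cast_sq] at hQ
  set s := ε / μ with hs_def
  have hμ0 : 0 < μ := by linarith
  have hs : 0 ≤ s := by positivity
  have hsε : s ≤ ε := div_le_self hε0.le hμ
  have hsa : s * a ≤ ε * (1 - ε) := by
    calc s * a ≤ s * ((1 - ε) * μ) := by gcongr
      _ = ε * (1 - ε) := by simp only [s]; field_simp
  have hsa4 : s * a ≤ 1 / 4 := hsa.trans (by nlinarith [sq_nonneg (1 - 2 * ε)])
  have hsa1 : s * (a + 1) ≤ 1 := by nlinarith
  have hweight := exp_le_lowerWeight hs hsa1 hsa4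
  calc ∑ k ∈ (range (n + 1)).filter (fun k : ℕ => (k : ℝ) ≤ (1 - ε) * μ), p n k
      ≤ (1 - s) ^ n * lowerWeight s 0 / lowerWeight s a :=
        hp.sum_filter_le_pow_mul_div _ (by linarith) (lowerWeight_nonneg hs)
          (lowerWeight_drift_le hs (by linarith)) ((exp_pos _).trans_le hweight)
          (fun k hk => lowerWeight_antitone hs (Nat.le_floor hk)) n
    _ ≤ exp (-(n * s)) / exp (-(s * P) - 2 / 3 * s ^ 2 * Q) := by
        rw [lowerWeight_zero, mul_one, ← mul_neg, exp_nat_mul]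
        gcongr
        · linarith
        · linarith [add_one_le_exp (-s)]
    _ = exp (-(n * s) + s * P + 2 / 3 * s ^ 2 * Q) := by rw [← exp_sub]; ring_nf
    _ ≤ exp (-(ε ^ 2 * μ) / 3) := by
        have hbound := mul_le_mul_of_nonneg_left
          (lower_tail_exponent_bound hμ hε0.le (Nat.cast_nonneg a) ha) hε0.le
        rw [exp_le_exp, hP, hQ, hs_def]
        field_simp
        nlinarith

end IsChainDistrib

open Classical in
/-- Chernoff-type deviation bounds for the chain with `p_{k,k+1} = 1/(1+k)`,
`p_{k,k} = k/(k+1)`, `X_0 = 0`, with mean `μ_n = (-1+√(1+8n))/2`: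
for `0 < ε < 1`, `P(X_n ≥ (1+ε)μ_n) ≤ exp(-ε²μ_n/3)` and
`P(X_n ≤ (1-ε)μ_n) ≤ exp(-ε²μ_n/3)`. -/
theorem stmt_7 (p : ℕ → ℕ → ℝ)
    (h00 : p 0 0 = 1)
    (hn0 : ∀ n : ℕ, 1 ≤ n → p n 0 = 0)
    (hupper : ∀ i j : ℕ, i + 1 ≤ j → p i j = 0)
    (hrec : ∀ n k : ℕ, 1 ≤ k → k ≤ n + 1 →
      p (n + 1) k = ((k : ℝ) / ((k : ℝ) + 1)) * p n k + (1 / (k : ℝ)) * p n (k - 1))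
    (m : ℕ → ℝ) (hm : ∀ n, m n = (-1 + Real.sqrt (1 + 8 * (n : ℝ))) / 2) :
    ∀ n : ℕ, ∀ ε : ℝ, 0 < ε → ε < 1 →
      ((∑ k ∈ (Finset.range (n + 1)).filter (fun k : ℕ => (1 + ε) * m n ≤ (k : ℝ)), p n k) ≤
        Real.exp (-(ε ^ 2 * m n) / 3)) ∧
      ((∑ k ∈ (Finset.range (n + 1)).filter (fun k : ℕ => (k : ℝ) ≤ (1 - ε) * m n), p n k) ≤
        Real.exp (-(ε ^ 2 * m n) / 3)) := by
  have hp : IsChainDistrib p := ⟨h00, hn0, hupper, hrec⟩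
  intro n ε hε0 hε1
  rcases Nat.eq_zero_or_pos n with rfl | hn
  · have hm0 : m 0 = 0 := by simp [hm]
    simp only [hm0, mul_zero, neg_zero, zero_div, exp_zero]
    exact ⟨hp.sum_filter_le_one _ 0, hp.sum_filter_le_one _ 0⟩
  · have hsqrt := sq_sqrt (by positivity : (0 : ℝ) ≤ 1 + 8 * n)
    have hμn : m n ^ 2 + m n = 2 * n := by rw [hm]; linear_combination hsqrt / 4
    have hμ : 1 ≤ m n := by
      have : (1 : ℝ) ≤ n := by exact_mod_cast hn
      nlinarith [hm n, sqrt_nonneg (1 + 8 * (n : ℝ))]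
    exact ⟨hp.upper_tail_le hμ hμn hε0 hε1, hp.lower_tail_le hμ hμn hε0 hε1⟩
end

section
/- Let θ^i_{n+1} = P(Y^i_{n+1} = 1) be the probability that the arc i → n+1 is created, i.e., the probability that the (n+1-i)-th trial of the i-th urn is a success. Then θ^i_{n+1} ~ 1/√(2(n-i)+1) as n - i → ∞. -/
open Finset Filter

/-!
With `Z = X(X+1)` one has `E[Z_{d+1} | X_d] = Z_d + 2`, so `E Z_d = 2d`, hence `E X_d ≤ √(2d)`
by Jensen, and Jensen for `x ↦ 1/x` gives `θ_d ≥ 1/(1 + √(2d))`.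
Conversely `g(k) = 1/((k+2)(k+3))` satisfies `T g ≤ g - 2g²` for the transition operator `T`, so
`G_d = E g(X_d)` obeys `G_{d+1} ≤ G_d - 2G_d²`, whence `G_d ≤ 1/(2d+6)`; since
`1/(k+1) ≤ √g(k) + 4g(k)`, Jensen gives `θ_d ≤ √G_d + 4G_d`.
Together, `|θ_d √(2d+1) - 1| ≤ 4/√(2d+1)`.
-/

namespace Urn

/-- `p n k = P(X_n = k)`. -/
structure IsLaw (p : ℕ → ℕ → ℝ) : Prop where
  zero_zero : p 0 0 = 1
  succ_zero : ∀ n : ℕ, 1 ≤ n → p n 0 = 0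
  eq_zero_of_lt : ∀ i j : ℕ, i + 1 ≤ j → p i j = 0
  succ : ∀ n k : ℕ, 1 ≤ k → k ≤ n + 1 →
    p (n + 1) k = ((k : ℝ) / ((k : ℝ) + 1)) * p n k + (1 / (k : ℝ)) * p n (k - 1)

/-- `expect p d f = E f(X_d)`; `X_d ≤ d`, so the sum runs over the whole support. -/
def expect (p : ℕ → ℕ → ℝ) (d : ℕ) (f : ℕ → ℝ) : ℝ :=
  ∑ k ∈ range (d + 1), p d k * f k

/-- The one-step transition operator of the chain: `(T f)(k) = E[f(X_{n+1}) | X_n = k]`. -/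
noncomputable def transition (f : ℕ → ℝ) (k : ℕ) : ℝ :=
  (k : ℝ) / (k + 1) * f k + 1 / (k + 1) * f (k + 1)

theorem transition_mul_succ (k : ℕ) :
    transition (fun k => (k : ℝ) * (k + 1)) k = k * (k + 1) + 2 := by
  simp only [transition]
  push_cast
  field_simp
  ring

noncomputable def potential (k : ℕ) : ℝ := 1 / ((k + 2) * (k + 3))

theorem potential_pos (k : ℕ) : 0 < potential k := by
  unfold potential
  positivity

theorem transition_potential_le (k : ℕ) :
    transition potential k ≤ potential k - 2 * potential k ^ 2 := by
  have h : potential k - 2 * potential k ^ 2 - transition potential k =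
      4 / ((k + 1) * (k + 2) ^ 2 * (k + 3) ^ 2 * (k + 4)) := by
    simp only [transition, potential]
    push_cast
    field_simp
    ring
  have : 0 ≤ potential k - 2 * potential k ^ 2 - transition potential k := by
    rw [h]
    positivity
  linarith

theorem sub_two_mul_sq_le {x D : ℝ} (hxD : x ≤ 1 / D) (hD : 4 ≤ D) :
    x - 2 * x ^ 2 ≤ 1 / (D + 2) := by
  have hD0 : 0 < D := by linarith
  have hmono : x - 2 * x ^ 2 ≤ 1 / D - 2 * (1 / D) ^ 2 := by
    have : 1 / D ≤ 1 / 4 := one_div_le_one_div_of_le (by norm_num) hD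
    nlinarith
  have hend : 1 / D - 2 * (1 / D) ^ 2 ≤ 1 / (D + 2) := by
    have h : 1 / D - 2 * (1 / D) ^ 2 = (D - 2) / D ^ 2 := by
      field_simp
    rw [h, div_le_div_iff₀ (by positivity) (by positivity)]
    nlinarith
  linarith

theorem one_div_succ_le_sqrt_potential_add (k : ℕ) :
    1 / ((k : ℝ) + 1) ≤ √(potential k) + 4 * potential k := by
  have hsqrt : 1 / ((k : ℝ) + 3) ≤ √(potential k) := by
    refine Real.le_sqrt_of_sq_le ?_
    rw [potential, div_pow, one_pow, sq]
    gcongr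
    linarith
  have hrest : 1 / ((k : ℝ) + 1) - 1 / (k + 3) ≤ 4 * potential k := by
    rw [potential, div_sub_div _ _ (by positivity) (by positivity), mul_one_div,
      div_le_div_iff₀ (by positivity) (by positivity)]
    nlinarith
  linarith

variable {p : ℕ → ℕ → ℝ}

theorem expect_add (d : ℕ) (f g : ℕ → ℝ) :
    expect p d (fun k => f k + g k) = expect p d f + expect p d g := by
  simp only [expect, mul_add, sum_add_distrib]

theorem expect_sub (d : ℕ) (f g : ℕ → ℝ) :
    expect p d (fun k => f k - g k) = expect p d f - expect p d g := by
  simp only [expect, mul_sub, sum_sub_distrib]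

theorem expect_const_mul (d : ℕ) (c : ℝ) (f : ℕ → ℝ) :
    expect p d (fun k => c * f k) = c * expect p d f := by
  simp only [expect, mul_sum, mul_left_comm]

namespace IsLaw

variable (hp : IsLaw p)
include hp

theorem nonneg (d k : ℕ) : 0 ≤ p d k := by
  induction d generalizing k with
  | zero =>
    rcases Nat.eq_zero_or_pos k with rfl | hk
    · simp [hp.zero_zero]
    · simp [hp.eq_zero_of_lt 0 k hk]
  | succ d ih =>
    rcases Nat.eq_zero_or_pos k with rfl | hk
    · simp [hp.succ_zero (d + 1) (by omega)]
    · by_cases hkd : k ≤ d + 1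
      · rw [hp.succ d k hk hkd]
        have := ih k
        have := ih (k - 1)
        positivity
      · simp [hp.eq_zero_of_lt (d + 1) k (by omega)]

theorem expect_succ (d : ℕ) (f : ℕ → ℝ) :
    expect p (d + 1) f = expect p d (transition f) := by
  have hshift : ∀ h : ℕ → ℝ, h 0 = 0 → h (d + 1) = 0 →
      ∑ k ∈ range (d + 1), h (k + 1) = ∑ k ∈ range (d + 1), h k := by
    intro h h0 hd
    rw [← add_zero (∑ k ∈ range (d + 1), h (k + 1)), ← h0, ← sum_range_succ',
      sum_range_succ, hd, add_zero]
  rw [expect, sum_range_succ', hp.succ_zero (d + 1) (by omega), zero_mul, add_zero]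
  have hstep : ∀ k ∈ range (d + 1), p (d + 1) (k + 1) * f (k + 1) =
      p d (k + 1) * ((k + 1 : ℕ) / ((k + 1 : ℕ) + 1) * f (k + 1)) +
        p d k * (1 / (k + 1) * f (k + 1)) := by
    intro k hk
    rw [hp.succ d (k + 1) (by omega) (by simp at hk; omega), Nat.add_sub_cancel]
    push_cast
    ring
  rw [sum_congr rfl hstep, sum_add_distrib,
    hshift (fun k => p d k * ((k : ℝ) / (k + 1) * f k)) (by simp)
      (by simp [hp.eq_zero_of_lt d (d + 1) le_rfl]),
    ← sum_add_distrib]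
  exact sum_congr rfl fun k _ => by simp only [transition]; ring

theorem expect_const (d : ℕ) (c : ℝ) : expect p d (fun _ => c) = c := by
  induction d with
  | zero => simp [expect, hp.zero_zero]
  | succ d ih =>
    have hconst : transition (fun _ => c) = fun _ => c := by
      ext k
      simp only [transition]
      field_simp
    rw [hp.expect_succ, hconst, ih]

theorem sum_eq_one (d : ℕ) : ∑ k ∈ range (d + 1), p d k = 1 := by
  simpa [expect] using hp.expect_const d 1

theorem expect_mono (d : ℕ) {f g : ℕ → ℝ} (hfg : ∀ k, f k ≤ g k) :
    expect p d f ≤ expect p d g :=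
  sum_le_sum fun k _ => mul_le_mul_of_nonneg_left (hfg k) (hp.nonneg d k)

theorem expect_sqrt_le_sqrt_expect (d : ℕ) {f : ℕ → ℝ} (hf : ∀ k, 0 ≤ f k) :
    expect p d (fun k => √(f k)) ≤ √(expect p d f) :=
  Real.strictConcaveOn_sqrt.concaveOn.le_map_sum (fun k _ => hp.nonneg d k)
    (hp.sum_eq_one d) (fun k _ => hf k)

theorem one_div_expect_le_expect_one_div (d : ℕ) {f : ℕ → ℝ} (hf : ∀ k, 0 < f k) :
    1 / expect p d f ≤ expect p d (fun k => 1 / f k) := by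
  have h := (convexOn_zpow (-1)).map_sum_le (fun k _ => hp.nonneg d k) (hp.sum_eq_one d)
    (fun k _ => Set.mem_Ioi.2 (hf k))
  simp only [zpow_neg_one, smul_eq_mul, ← one_div] at h
  exact h

theorem sq_expect_le_expect_sq (d : ℕ) (f : ℕ → ℝ) :
    expect p d f ^ 2 ≤ expect p d (fun k => f k ^ 2) :=
  (Even.convexOn_pow even_two).map_sum_le (fun k _ => hp.nonneg d k)
    (hp.sum_eq_one d) (fun _ _ => Set.mem_univ _)

theorem expect_mul_succ (d : ℕ) : expect p d (fun k => (k : ℝ) * (k + 1)) = 2 * d := by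
  induction d with
  | zero => simp [expect]
  | succ d ih =>
    rw [hp.expect_succ, funext transition_mul_succ, expect_add, ih, hp.expect_const]
    push_cast
    ring

theorem expect_le_sqrt (d : ℕ) : expect p d (fun k => (k : ℝ)) ≤ √(2 * d) := calc
  expect p d (fun k => (k : ℝ)) ≤ expect p d (fun k => √((k : ℝ) * (k + 1))) :=
    hp.expect_mono d fun k => Real.le_sqrt_of_sq_le (by nlinarith)
  _ ≤ √(expect p d (fun k => (k : ℝ) * (k + 1))) :=
    hp.expect_sqrt_le_sqrt_expect d fun k => by positivity
  _ = √(2 * d) := by rw [hp.expect_mul_succ]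

theorem one_div_one_add_sqrt_le_expect (d : ℕ) :
    1 / (1 + √(2 * d)) ≤ expect p d (fun k => 1 / ((k : ℝ) + 1)) := calc
  1 / (1 + √(2 * d)) ≤ 1 / expect p d (fun k => (k : ℝ) + 1) := by
    have hX : 0 ≤ expect p d (fun k => (k : ℝ)) :=
      hp.expect_const d 0 ▸ hp.expect_mono d fun k => Nat.cast_nonneg k
    rw [expect_add, hp.expect_const]
    exact one_div_le_one_div_of_le (by positivity) (by linarith [hp.expect_le_sqrt d])
  _ ≤ _ := hp.one_div_expect_le_expect_one_div d fun k => by positivity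

theorem expect_potential_le (d : ℕ) : expect p d potential ≤ 1 / (2 * d + 6) := by
  induction d with
  | zero => norm_num [expect, hp.zero_zero, potential]
  | succ d ih =>
    have hdecay : expect p (d + 1) potential ≤
        expect p d potential - 2 * expect p d potential ^ 2 := calc
      expect p (d + 1) potential
          ≤ expect p d (fun k => potential k - 2 * potential k ^ 2) := by
        rw [hp.expect_succ]
        exact hp.expect_mono d transition_potential_le
      _ ≤ _ := by
        rw [expect_sub, expect_const_mul]
        linarith [hp.sq_expect_le_expect_sq d potential]
    have hD : (4 : ℝ) ≤ 2 * d + 6 := by linarith [Nat.cast_nonneg (α := ℝ) d]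
    refine hdecay.trans ((sub_two_mul_sq_le ih hD).trans_eq ?_)
    push_cast
    ring_nf

theorem expect_one_div_succ_le (d : ℕ) :
    expect p d (fun k => 1 / ((k : ℝ) + 1)) ≤ 1 / √(2 * d + 6) + 4 / (2 * d + 6) := calc
  expect p d (fun k => 1 / ((k : ℝ) + 1))
      ≤ expect p d (fun k => √(potential k) + 4 * potential k) :=
    hp.expect_mono d one_div_succ_le_sqrt_potential_add
  _ ≤ √(expect p d potential) + 4 * expect p d potential := by
    rw [expect_add, expect_const_mul]
    gcongr
    exact hp.expect_sqrt_le_sqrt_expect d fun k => (potential_pos k).le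
  _ ≤ √(1 / (2 * d + 6)) + 4 * (1 / (2 * d + 6)) := by
    gcongr <;> exact hp.expect_potential_le d
  _ = 1 / √(2 * d + 6) + 4 / (2 * d + 6) := by
    simp only [div_eq_mul_inv, one_mul, Real.sqrt_inv]

theorem abs_expect_one_div_succ_mul_sqrt_sub_one_le (d : ℕ) :
    |expect p d (fun k => 1 / ((k : ℝ) + 1)) * √(2 * d + 1) - 1| ≤ 4 / √(2 * d + 1) := by
  set θ := expect p d (fun k => 1 / ((k : ℝ) + 1))
  set s := √(2 * d + 1) with hs
  have hd : (0 : ℝ) ≤ d := d.cast_nonneg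
  have hs1 : 1 ≤ s := Real.one_le_sqrt.2 (by linarith)
  have hs2 : s ^ 2 = 2 * d + 1 := Real.sq_sqrt (by linarith)
  have hlower : 1 / (1 + s) ≤ θ := (one_div_le_one_div_of_le (by positivity)
    (by rw [hs]; gcongr; linarith)).trans (hp.one_div_one_add_sqrt_le_expect d)
  have hupper : θ ≤ 1 / s + 4 / s ^ 2 := (hp.expect_one_div_succ_le d).trans (by
    rw [hs2, hs]
    gcongr <;> linarith)
  rw [abs_sub_le_iff]
  constructor
  · calc θ * s - 1 ≤ (1 / s + 4 / s ^ 2) * s - 1 := by gcongr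
      _ = 4 / s := by field_simp; ring
  · calc 1 - θ * s ≤ 1 - 1 / (1 + s) * s := by gcongr
      _ = 1 / (1 + s) := by field_simp; ring
      _ ≤ 4 / s := by rw [div_le_div_iff₀ (by positivity) (by positivity)]; linarith

end IsLaw

end Urn

/-- The success probability of the `(n+1-i)`-th trial of the `i`-th urn,
`θ^i_{n+1} = E(1/(1+X_{n-i}))` where `X` is the chain with `p_{k,k+1} = 1/(1+k)`,
`p_{k,k} = k/(k+1)`, `X_0 = 0`, satisfies `θ^i_{n+1} ~ 1/√(2(n-i)+1)` as `n-i → ∞`. -/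
theorem stmt_9 (p : ℕ → ℕ → ℝ)
    (h00 : p 0 0 = 1)
    (hn0 : ∀ n : ℕ, 1 ≤ n → p n 0 = 0)
    (hupper : ∀ i j : ℕ, i + 1 ≤ j → p i j = 0)
    (hrec : ∀ n k : ℕ, 1 ≤ k → k ≤ n + 1 →
      p (n + 1) k = ((k : ℝ) / ((k : ℝ) + 1)) * p n k + (1 / (k : ℝ)) * p n (k - 1))
    (θ : ℕ → ℝ)
    (hθ : ∀ d : ℕ, θ d = ∑ k ∈ Finset.range (d + 1), (1 / ((k : ℝ) + 1)) * p d k) :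
    Tendsto (fun d : ℕ => θ d * Real.sqrt (2 * (d : ℝ) + 1)) atTop (nhds 1) := by
  have hp : Urn.IsLaw p := ⟨h00, hn0, hupper, hrec⟩
  have hθ_expect (d : ℕ) : θ d = Urn.expect p d (fun k => 1 / ((k : ℝ) + 1)) := by
    rw [hθ]
    exact sum_congr rfl fun _ _ => mul_comm _ _
  have hs : Tendsto (fun d : ℕ => √(2 * (d : ℝ) + 1)) atTop atTop :=
    Real.tendsto_sqrt_atTop.comp <| tendsto_atTop_add_const_right _ 1 <|
      tendsto_natCast_atTop_atTop.const_mul_atTop two_pos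
  rw [tendsto_iff_norm_sub_tendsto_zero]
  refine squeeze_zero (fun _ => norm_nonneg _) (fun d => ?_)
    (tendsto_const_nhds (x := (4 : ℝ)).div_atTop hs)
  rw [Real.norm_eq_abs, hθ_expect]
  exact hp.abs_expect_one_div_succ_mul_sqrt_sub_one_le d
end

section
/- Define recursively S^{(1)}_i = S^{(0)}_{i+1} + b_0 S^{(0)}_i and S^{(k+1)}_i = S^{(k)}_{i+1} + b_k S^{(k)}_i - α² S^{(k-1)}_i for i ≥ 0 and 0 ≤ k ≤ i+1, where b_k = 1/(k+1) + kα², with conventions S^{(-1)}_i = 0 and S^{(n)}_i = 0 for n > i. Then for every k ≥ 0, the power series p(k,t) = (1/(α^{2k} k!)) · Σ_{i=0}^{∞} (λt)^i/i! · S^{(k)}_i converges for all t ≥ 0 and solves the birth-death ODE system p'(k,t) = -((λ/(1+k)) + kμ) p(k,t) + (λ/k) p(k-1,t)·1_{k≥1} + μ(k+1) p(k+1,t), with p(k,0) = δ_{k,0}. -/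
/-!
Read in the index `i`, the recursion expresses `S^{(k)}_{i+1}` through `S^{(k+1)}_i`,
`S^{(k)}_i` and `S^{(k-1)}_i` with weights of size at most `1`, `(k+1)(1+α²)` and `α²`.
The count `markedBell k i = ∑_b C(b,k) S₂(i,b)` (with `S₂` the Stirling numbers of the second
kind) satisfies this recursion with equality, so `|S^{(k)}_i| ≤ (1+α²)^i markedBell k i`. From
`S₂(i,b) ≤ C(i,b) b^{i-b}` the exponential generating function of `markedBell k` is dominated by
`exp (2x eˣ)`, hence every series `∑ (λt)^i/i! S^{(k)}_i` is entire. Termwise differentiation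
shifts `i` to `i+1`, the recursion rewrites the shifted series through the neighbouring series,
and with `α² = μ/λ` the normalisation `1/(α^{2k} k!)` turns this into the forward equations.
-/

open Finset

open scoped Nat

namespace Nat

theorem stirlingSecond_le_choose_mul_pow :
    ∀ n k : ℕ, stirlingSecond n k ≤ n.choose k * k ^ (n - k)
  | 0, 0 => le_rfl
  | 0, _ + 1 => by simp
  | _ + 1, 0 => by simp
  | n + 1, k + 1 => by
    have hfirst : (k + 1) * stirlingSecond n (k + 1) ≤ n.choose (k + 1) * (k + 1) ^ (n - k) := by
      rcases lt_or_ge k n with hkn | hnk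
      · calc (k + 1) * stirlingSecond n (k + 1)
            ≤ (k + 1) * (n.choose (k + 1) * (k + 1) ^ (n - (k + 1))) :=
              Nat.mul_le_mul_left _ (stirlingSecond_le_choose_mul_pow n (k + 1))
          _ = n.choose (k + 1) * (k + 1) ^ (n - k) := by
              rw [show n - k = n - (k + 1) + 1 by omega, pow_succ]; ring
      · simp [stirlingSecond_eq_zero_of_lt (show n < k + 1 by omega)]
    have hsecond : stirlingSecond n k ≤ n.choose k * (k + 1) ^ (n - k) :=
      (stirlingSecond_le_choose_mul_pow n k).trans
        (Nat.mul_le_mul_left _ (Nat.pow_le_pow_left k.le_succ _))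
    rw [stirlingSecond_succ_succ, choose_succ_succ', add_mul, Nat.add_sub_add_right]
    linarith

theorem sum_mul_stirlingSecond_succ (f : ℕ → ℕ) (n : ℕ) :
    ∑ k ∈ range (n + 2), f k * stirlingSecond (n + 1) k =
      ∑ k ∈ range (n + 1), (k * f k + f (k + 1)) * stirlingSecond n k := by
  have hshift : ∑ k ∈ range (n + 1), f (k + 1) * ((k + 1) * stirlingSecond n (k + 1)) =
      ∑ k ∈ range (n + 1), k * f k * stirlingSecond n k := by
    rw [sum_range_succ, sum_range_succ', stirlingSecond_eq_zero_of_lt n.lt_succ_self]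
    simp only [mul_zero, add_zero, zero_mul]
    exact sum_congr rfl fun k _ => by ring
  simp only [add_mul, sum_add_distrib, ← hshift]
  rw [sum_range_succ', stirlingSecond_succ_zero, mul_zero, add_zero, ← sum_add_distrib]
  exact sum_congr rfl fun k _ => by rw [stirlingSecond_succ_succ]; ring

theorem mul_choose_succ (n k : ℕ) :
    n * n.choose (k + 1) = (k + 2) * n.choose (k + 2) + (k + 1) * n.choose (k + 1) := by
  rcases lt_or_ge n (k + 1) with h | h
  · simp [choose_eq_zero_of_lt h, choose_eq_zero_of_lt (h.trans k.succ.lt_succ_self)]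
  · rw [mul_comm (k + 2), choose_succ_right_eq n (k + 1)]
    zify [h]
    ring

end Nat

open Nat

/-- The number of partitions of an `n`-set with `k` of the blocks marked. -/
def markedBell (k n : ℕ) : ℕ := ∑ b ∈ range (n + 1), b.choose k * stirlingSecond n b

theorem markedBell_zero_zero : markedBell 0 0 = 1 := rfl

theorem markedBell_zero_succ (n : ℕ) :
    markedBell 0 (n + 1) = markedBell 1 n + markedBell 0 n := by
  simp only [markedBell, sum_mul_stirlingSecond_succ, ← sum_add_distrib]
  exact sum_congr rfl fun b _ => by simp; ring

theorem markedBell_succ_succ (k n : ℕ) :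
    markedBell (k + 1) (n + 1) =
      (k + 2) * (markedBell (k + 2) n + markedBell (k + 1) n) + markedBell k n := by
  simp only [markedBell, sum_mul_stirlingSecond_succ, mul_sum, ← sum_add_distrib]
  refine sum_congr rfl fun b _ => ?_
  rw [mul_choose_succ, choose_succ_succ']
  ring

theorem summable_sum_antidiagonal {E : Type*} [AddCommMonoid E] [TopologicalSpace E]
    [ContinuousAdd E] [T3Space E] {F : ℕ × ℕ → E} (hF : Summable F) :
    Summable fun n => ∑ p ∈ antidiagonal n, F p := by
  refine ((HasAntidiagonal.sigmaAntidiagonalEquivProd.summable_iff.mpr hF).sigma'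
    fun n => (hasSum_fintype _).summable).congr fun n => ?_
  rw [tsum_fintype]
  exact sum_finset_coe (fun p => F p) (antidiagonal n)

theorem summable_pow_div_factorial_mul_markedBell (k : ℕ) {x : ℝ} (hx : 0 ≤ x) :
    Summable fun n => x ^ n / n ! * (markedBell k n : ℝ) := by
  set F : ℕ × ℕ → ℝ := fun p => (2 * x) ^ p.1 / p.1 ! * ((p.1 * x) ^ p.2 / p.2 !) with hF_def
  have hF : Summable F := by
    have hexp : ∀ y : ℝ, ∑' m : ℕ, y ^ m / m ! = Real.exp y := fun y => by
      rw [Real.exp_eq_exp_ℝ]; exact (NormedSpace.expSeries_div_hasSum_exp y).tsum_eq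
    refine (summable_prod_of_nonneg fun p => by positivity).mpr ⟨fun b => ?_, ?_⟩
    · exact (Real.summable_pow_div_factorial (b * x)).mul_left ((2 * x) ^ b / b !)
    simp only [hF_def, tsum_mul_left, hexp]
    refine (Real.summable_pow_div_factorial (2 * x * Real.exp x)).congr fun b => ?_
    rw [mul_pow, Real.exp_nat_mul]
    ring
  refine Summable.of_nonneg_of_le (fun n => by positivity) (fun n => ?_)
    (summable_sum_antidiagonal hF)
  rw [markedBell, Nat.sum_antidiagonal_eq_sum_range_succ_mk, Nat.cast_sum, mul_sum]
  refine sum_le_sum fun b hb => ?_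
  obtain ⟨m, rfl⟩ := exists_add_of_le (mem_range_succ_iff.mp hb)
  have hbound : b.choose k * stirlingSecond (b + m) b ≤ 2 ^ b * ((b + m).choose b * b ^ m) := by
    simpa using Nat.mul_le_mul (choose_le_two_pow b k) (stirlingSecond_le_choose_mul_pow (b + m) b)
  calc x ^ (b + m) / (b + m)! * ((b.choose k * stirlingSecond (b + m) b : ℕ) : ℝ)
      ≤ x ^ (b + m) / (b + m)! * (2 ^ b * ((b + m).choose b * b ^ m) : ℕ) := by gcongr
    _ = F (b, b + m - b) := by
      rw [Nat.add_sub_cancel_left, hF_def]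
      push_cast
      rw [Nat.cast_add_choose]
      field_simp
      ring

theorem abs_le_pow_mul_markedBell {S : ℕ → ℕ → ℝ} {β : ℕ → ℝ} {γ C : ℝ} (hC : 1 ≤ C)
    (hβ : ∀ k, |β k| ≤ (k + 1) * C) (hγ : |γ| ≤ C) (h00 : |S 0 0| ≤ 1)
    (hk0 : ∀ k, S (k + 1) 0 = 0) (h0 : ∀ i, S 0 (i + 1) = S 1 i - β 0 * S 0 i)
    (hsucc : ∀ k i, S (k + 1) (i + 1) = S (k + 2) i - β (k + 1) * S (k + 1) i + γ * S k i) :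
    ∀ i k, |S k i| ≤ C ^ i * markedBell k i := by
  intro i
  induction i with
  | zero =>
    rintro (_ | k)
    · simpa [markedBell_zero_zero] using h00
    · simp [hk0]
  | succ i ih =>
    have hP : 1 ≤ C ^ i := one_le_pow₀ hC
    have hQ : ∀ k, (0 : ℝ) ≤ markedBell k i := fun k => Nat.cast_nonneg _
    rintro (_ | k)
    · have hβS : |β 0 * S 0 i| ≤ C * (C ^ i * markedBell 0 i) := by
        rw [abs_mul]
        exact mul_le_mul (by simpa using hβ 0) (ih 0) (abs_nonneg _) (by linarith)
      calc |S 0 (i + 1)| ≤ |S 1 i| + |β 0 * S 0 i| := by rw [h0]; exact abs_sub _ _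
        _ ≤ C ^ i * markedBell 1 i + C * (C ^ i * markedBell 0 i) := add_le_add (ih 1) hβS
        _ ≤ C ^ (i + 1) * markedBell 0 (i + 1) := by
          rw [markedBell_zero_succ, pow_succ]
          push_cast
          nlinarith [mul_le_mul_of_nonneg_left hC (mul_nonneg (by linarith : (0 : ℝ) ≤ C ^ i) (hQ 1))]
    · have hβS : |β (k + 1) * S (k + 1) i| ≤ (k + 2) * C * (C ^ i * markedBell (k + 1) i) := by
        rw [abs_mul]
        refine mul_le_mul ?_ (ih (k + 1)) (abs_nonneg _) (by positivity)
        simpa [add_assoc, one_add_one_eq_two] using hβ (k + 1)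
      have hγS : |γ * S k i| ≤ C * (C ^ i * markedBell k i) := by
        rw [abs_mul]
        exact mul_le_mul hγ (ih k) (abs_nonneg _) (by linarith)
      calc |S (k + 1) (i + 1)| ≤ |S (k + 2) i| + |β (k + 1) * S (k + 1) i| + |γ * S k i| := by
            rw [hsucc]
            linarith [abs_add_le (S (k + 2) i - β (k + 1) * S (k + 1) i) (γ * S k i),
              abs_sub (S (k + 2) i) (β (k + 1) * S (k + 1) i)]
        _ ≤ C ^ i * markedBell (k + 2) i + (k + 2) * C * (C ^ i * markedBell (k + 1) i) +
              C * (C ^ i * markedBell k i) := add_le_add (add_le_add (ih (k + 2)) hβS) hγS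
        _ ≤ C ^ (i + 1) * markedBell (k + 1) (i + 1) := by
          rw [markedBell_succ_succ, pow_succ]
          push_cast
          have : C ^ i * markedBell (k + 2) i ≤ (k + 2) * C * (C ^ i * markedBell (k + 2) i) :=
            le_mul_of_one_le_left (by positivity) (by nlinarith [(k.cast_nonneg : (0 : ℝ) ≤ k)])
          nlinarith

noncomputable def egf (a : ℕ → ℝ) (x : ℝ) : ℝ := ∑' n, x ^ n / n ! * a n

theorem egf_zero (a : ℕ → ℝ) : egf a 0 = a 0 := by
  rw [egf, tsum_eq_single 0 fun n hn => by simp [hn]]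
  simp

theorem summable_egf {a : ℕ → ℝ} (ha : ∀ r, 0 ≤ r → Summable fun n => r ^ n / n ! * |a n|)
    (x : ℝ) : Summable fun n => x ^ n / n ! * a n :=
  (ha |x| (abs_nonneg x)).of_norm_bounded fun n => by
    simp only [norm_mul, norm_div, norm_pow, Real.norm_eq_abs, Nat.abs_cast, le_refl]

theorem hasDerivAt_egf {a : ℕ → ℝ} (ha : ∀ r, 0 ≤ r → Summable fun n => r ^ n / n ! * |a n|)
    (x : ℝ) : HasDerivAt (egf a) (egf (fun n => a (n + 1)) x) x := by
  set R := |x| + 1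
  have hR : 1 ≤ R := by simp [R]
  have hx : x ∈ Set.Ioo (-R) R := abs_lt.mp (by simp [R])
  have hbound : ∀ n, ∀ y ∈ Set.Ioo (-R) R,
      ‖n * y ^ (n - 1) / n ! * a n‖ ≤ (2 * R) ^ n / n ! * |a n| := by
    intro n y hy
    have hy : |y| ≤ R := (abs_lt.mpr hy).le
    have hpow : n * |y| ^ (n - 1) ≤ (2 * R) ^ n := calc
      n * |y| ^ (n - 1) ≤ 2 ^ n * R ^ n := by
        gcongr
        · exact_mod_cast n.lt_two_pow_self.le
        · exact (pow_le_pow_left₀ (abs_nonneg y) hy _).trans (pow_le_pow_right₀ hR (n.sub_le 1))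
      _ = (2 * R) ^ n := (mul_pow 2 R n).symm
    rw [Real.norm_eq_abs, abs_mul, abs_div, abs_mul, abs_pow, Nat.abs_cast, Nat.abs_cast]
    gcongr
  have hsum' : Summable fun n => n * x ^ (n - 1) / n ! * a n :=
    (ha (2 * R) (by positivity)).of_norm_bounded fun n => hbound n x hx
  refine (hasDerivAt_tsum_of_isPreconnected (g := fun n y => y ^ n / n ! * a n)
    (ha (2 * R) (by positivity)) isOpen_Ioo isPreconnected_Ioo
    (fun n y _ => ((hasDerivAt_pow n y).div_const (n ! : ℝ)).mul_const (a n))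
    hbound hx (summable_egf ha x) hx).congr_deriv ?_
  rw [hsum'.tsum_eq_zero_add, egf]
  simp only [CharP.cast_eq_zero, zero_mul, zero_div, add_tsub_cancel_right, zero_add]
  refine tsum_congr fun n => ?_
  rw [Nat.factorial_succ]
  push_cast
  field_simp

theorem hasDerivAt_egf_const_mul {a : ℕ → ℝ}
    (ha : ∀ r, 0 ≤ r → Summable fun n => r ^ n / n ! * |a n|) (c t : ℝ) :
    HasDerivAt (fun s => egf a (c * s)) (egf (fun n => a (n + 1)) (c * t) * c) t := by
  have hscale : HasDerivAt (fun s => c * s) c t := by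
    simpa using (hasDerivAt_id t).const_mul c
  exact (hasDerivAt_egf ha _).comp t hscale

theorem egf_eq_sub_add {a u v w : ℕ → ℝ} {β γ x : ℝ} (h : ∀ n, a n = u n - β * v n + γ * w n)
    (hu : Summable fun n => x ^ n / n ! * u n) (hv : Summable fun n => x ^ n / n ! * v n)
    (hw : Summable fun n => x ^ n / n ! * w n) :
    egf a x = egf u x - β * egf v x + γ * egf w x := by
  simp only [egf, h, mul_add, mul_sub, mul_left_comm _ β, mul_left_comm _ γ]
  rw [(hu.sub (hv.mul_left β)).tsum_add (hw.mul_left γ), hu.tsum_sub (hv.mul_left β),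
    tsum_mul_left, tsum_mul_left]

theorem summable_of_abs_le_pow_mul_markedBell {a : ℕ → ℝ} {C : ℝ} {k : ℕ} (hC : 0 ≤ C)
    (ha : ∀ n, |a n| ≤ C ^ n * markedBell k n) (r : ℝ) (hr : 0 ≤ r) :
    Summable fun n => r ^ n / n ! * |a n| := by
  refine (summable_pow_div_factorial_mul_markedBell k (mul_nonneg hr hC)).of_nonneg_of_le
    (fun n => by positivity) fun n => ?_
  calc r ^ n / n ! * |a n| ≤ r ^ n / n ! * (C ^ n * markedBell k n) := by gcongr; exact ha n
    _ = (r * C) ^ n / n ! * markedBell k n := by ring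

theorem abs_inv_succ_add_mul_sq_le (α : ℝ) (k : ℕ) :
    |1 / ((k : ℝ) + 1) + k * α ^ 2| ≤ (k + 1) * (1 + α ^ 2) := by
  have hk : (0 : ℝ) ≤ k := k.cast_nonneg
  have hinv : 1 / ((k : ℝ) + 1) ≤ 1 := by rw [div_le_one (by positivity)]; linarith
  rw [abs_of_nonneg (by positivity)]
  nlinarith [sq_nonneg α]

/-- Transient solution of the discouragement queue (birth rates `λ/(1+k)`, death
rates `kμ`): with `α = √(μ/λ)`, `b_k = 1/(k+1) + kα²` and coefficients `S^{(k)}_i`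
given by the stated recursion (with `S^{(-1)}_i = 0`, `S^{(n)}_i = 0` for `n > i`
and `S^{(0)}_0 = 1`), the series `p(k,t) = (1/(α^{2k} k!)) Σ_i (λt)^i/i! · S^{(k)}_i`
converges for `t ≥ 0` and solves the birth–death system with `p(k,0) = δ_{k,0}`. -/
theorem stmt_12 (lam mu : ℝ) (hlam : 0 < lam) (hmu : 0 < mu)
    (α : ℝ) (hα : α = Real.sqrt (mu / lam))
    (b : ℕ → ℝ) (hb : ∀ k : ℕ, b k = 1 / ((k : ℝ) + 1) + (k : ℝ) * α ^ 2)
    (S : ℕ → ℕ → ℝ)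
    (hS00 : S 0 0 = 1)
    (hSzero : ∀ n i : ℕ, i < n → S n i = 0)
    (hrec1 : ∀ i : ℕ, S 1 i = S 0 (i + 1) + b 0 * S 0 i)
    (hrec : ∀ k i : ℕ, 1 ≤ k →
      S (k + 1) i = S k (i + 1) + b k * S k i - α ^ 2 * S (k - 1) i)
    (p : ℕ → ℝ → ℝ)
    (hp : ∀ (k : ℕ) (t : ℝ), p k t =
      (1 / (α ^ (2 * k) * (Nat.factorial k : ℝ))) *
        ∑' i : ℕ, (lam * t) ^ i / (Nat.factorial i : ℝ) * S k i) :
    (∀ (k : ℕ) (t : ℝ), 0 ≤ t →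
      Summable (fun i : ℕ => (lam * t) ^ i / (Nat.factorial i : ℝ) * S k i)) ∧
    (∀ k : ℕ, p k 0 = if k = 0 then 1 else 0) ∧
    (∀ t : ℝ, 0 ≤ t →
      HasDerivAt (fun s => p 0 s) (-(lam / 1) * p 0 t + mu * 1 * p 1 t) t) ∧
    (∀ k : ℕ, 1 ≤ k → ∀ t : ℝ, 0 ≤ t →
      HasDerivAt (fun s => p k s)
        (-(lam / (1 + (k : ℝ)) + (k : ℝ) * mu) * p k t +
          lam / (k : ℝ) * p (k - 1) t + mu * ((k : ℝ) + 1) * p (k + 1) t) t) := by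
  have hα0 : α ≠ 0 := by rw [hα]; exact (Real.sqrt_pos.mpr (div_pos hmu hlam)).ne'
  have hmu_eq : mu = α ^ 2 * lam := by
    rw [hα, Real.sq_sqrt (div_pos hmu hlam).le]; field_simp
  have hb0 : b 0 = 1 := by simp [hb]
  have hstep0 (i : ℕ) : S 0 (i + 1) = S 1 i - b 0 * S 0 i := by linarith [hrec1 i]
  have hstep (k i : ℕ) :
      S (k + 1) (i + 1) = S (k + 2) i - b (k + 1) * S (k + 1) i + α ^ 2 * S k i := by
    have h := hrec (k + 1) i (Nat.le_add_left 1 k)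
    rw [Nat.add_sub_cancel] at h
    linarith
  have hsum (k : ℕ) := summable_of_abs_le_pow_mul_markedBell (by positivity) fun n =>
    abs_le_pow_mul_markedBell (le_add_of_nonneg_right (sq_nonneg α))
      (fun k => hb k ▸ abs_inv_succ_add_mul_sq_le α k) (by simp) (by simp [hS00])
      (fun k => hSzero _ _ k.succ_pos) hstep0 hstep n k
  have hp' (k : ℕ) : p k = fun t => 1 / (α ^ (2 * k) * k !) * egf (S k) (lam * t) :=
    funext (hp k)
  have hderiv (k : ℕ) (t : ℝ) : HasDerivAt (p k)
      (1 / (α ^ (2 * k) * k !) * (egf (fun n => S k (n + 1)) (lam * t) * lam)) t := by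
    rw [hp']
    exact (hasDerivAt_egf_const_mul (hsum k) lam t).const_mul _
  refine ⟨fun k t _ => summable_egf (hsum k) (lam * t), fun k => ?_, fun t _ => ?_,
    fun k hk t _ => ?_⟩
  · rw [hp' k]
    rcases k with _ | k
    · simp [egf_zero, hS00]
    · simp [egf_zero, hSzero]
  · convert hderiv 0 t using 1
    rw [egf_eq_sub_add (w := S 0) (γ := 0) (fun n => by rw [hstep0]; ring)
      (summable_egf (hsum 1) _) (summable_egf (hsum 0) _) (summable_egf (hsum 0) _), hp', hp',
      hb0, hmu_eq]
    field_simp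
    ring
  · obtain ⟨m, rfl⟩ := Nat.exists_eq_add_of_le' hk
    convert hderiv (m + 1) t using 1
    rw [egf_eq_sub_add (hstep m) (summable_egf (hsum _) _) (summable_egf (hsum _) _)
      (summable_egf (hsum _) _), hp', hp', hp', hb, Nat.add_sub_cancel, hmu_eq]
    simp only [Nat.factorial_succ, pow_succ, pow_mul]
    push_cast
    field_simp
    ring
end

section
/- Let α > 0 and define d_k = Π_{i=0}^{k} 1/(1 + i(i-1)α²), and define T^{(h)}_k recursively by T^{(0)}_k = 1 for all k ≥ 0 and T^{(h)}_k = Σ_{i=0}^{k} ((d_{i+1} - d_{i+2})/d_i) · T^{(h-1)}_{i+1} for h ≥ 1. Then the numbers p_{n,k} = d_k · T^{((n-k)/2)}_k when n + k is even and 0 ≤ k ≤ n, and p_{n,k} = 0 otherwise, satisfy the embedded-chain recursion p_{n+1,k} = (1/(1 + k(k-1)α²)) p_{n,k-1} + ((k+2)(k+1)α²/(1 + (k+2)(k+1)α²)) p_{n,k+1} for all n ≥ 0 and 1 ≤ k ≤ n+1, with p_{0,0} = 1 and p_{n,k} = 0 for k > n. -/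
open Finset

/-! With `d (k+1) = d k * u (k+1)`, the recursion for `T` telescopes one summand at a time:
`T (h+1) (k+1) = T (h+1) k + (d (k+2) - d (k+3)) / d (k+1) * T h (k+2)`, and
`d (k+2) - d (k+3) = (1 - u (k+3)) * d (k+2)`. Multiplying by `d (k+1)` turns this into the
one-step equation of the chain for `d k * T h k`, the value at `k` after `k + 2h` steps. At the
diagonal `n = k` the equation is just `d (k+1) = u (k+1) * d k`. -/

/-- The up-step probability `1 / (1 + k(k-1)α²)` of the embedded chain, from `k - 1` to `k`. -/
noncomputable def upProb (α : ℝ) (k : ℕ) : ℝ := 1 / (1 + k * (k - 1) * α ^ 2)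

lemma one_add_mul_sub_one_mul_sq_pos (α : ℝ) (k : ℕ) : 0 < 1 + (k : ℝ) * (k - 1) * α ^ 2 := by
  rcases k with _ | k
  · norm_num
  · push_cast
    rw [add_sub_cancel_right]
    positivity

lemma upProb_ne_zero (α : ℝ) (k : ℕ) : upProb α k ≠ 0 :=
  one_div_ne_zero (one_add_mul_sub_one_mul_sq_pos α k).ne'

lemma one_sub_upProb_add_two (α : ℝ) (k : ℕ) :
    1 - upProb α (k + 2) = ((k : ℝ) + 2) * (k + 1) * α ^ 2 / (1 + (k + 2) * (k + 1) * α ^ 2) := by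
  have hpos : 0 < 1 + ((k : ℝ) + 2) * (k + 1) * α ^ 2 := by positivity
  rw [upProb]
  push_cast
  rw [show (k : ℝ) + 2 - 1 = k + 1 by ring]
  field_simp
  ring

/-- The candidate `p_{n,k}`, in the paper's closed form. -/
def closedFormProb (d : ℕ → ℝ) (T : ℕ → ℕ → ℝ) (n k : ℕ) : ℝ :=
  if k ≤ n ∧ (n + k) % 2 = 0 then d k * T ((n - k) / 2) k else 0

section ClosedForm

variable {u d : ℕ → ℝ} {T : ℕ → ℕ → ℝ}

lemma closedFormProb_of_lt {n k : ℕ} (h : n < k) : closedFormProb d T n k = 0 :=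
  if_neg fun hk => absurd hk.1 (not_le.2 h)

lemma closedFormProb_add_two_mul (k h : ℕ) : closedFormProb d T (k + 2 * h) k = d k * T h k := by
  rw [closedFormProb, if_pos ⟨by omega, by omega⟩]
  congr 2
  omega

lemma mul_T_succ_succ (hd : ∀ k, d (k + 1) = d k * u (k + 1)) (hd0 : ∀ k, d k ≠ 0)
    (hTrec : ∀ h k, T (h + 1) k = ∑ i ∈ range (k + 1), (d (i + 1) - d (i + 2)) / d i * T h (i + 1))
    (h k : ℕ) :
    d (k + 1) * T (h + 1) (k + 1) =
      u (k + 1) * (d k * T (h + 1) k) + (1 - u (k + 3)) * (d (k + 2) * T h (k + 2)) := by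
  have hT : T (h + 1) (k + 1) = T (h + 1) k + (d (k + 2) - d (k + 3)) / d (k + 1) * T h (k + 2) := by
    rw [hTrec, sum_range_succ, ← hTrec]
  have hne := hd0 (k + 1)
  rw [hT]
  field_simp
  rw [hd (k + 2), hd k]
  ring

lemma closedFormProb_succ_succ (hd : ∀ k, d (k + 1) = d k * u (k + 1)) (hd0 : ∀ k, d k ≠ 0)
    (hT0 : ∀ k, T 0 k = 1)
    (hTrec : ∀ h k, T (h + 1) k = ∑ i ∈ range (k + 1), (d (i + 1) - d (i + 2)) / d i * T h (i + 1))
    (n k : ℕ) :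
    closedFormProb d T (n + 1) (k + 1) =
      u (k + 1) * closedFormProb d T n k + (1 - u (k + 3)) * closedFormProb d T n (k + 2) := by
  by_cases hnk : k ≤ n ∧ (n + k) % 2 = 0
  · obtain rfl | ⟨m, rfl⟩ : k = n ∨ ∃ m, n = k + 2 * (m + 1) :=
      (eq_or_ne k n).imp id fun hne => ⟨(n - k) / 2 - 1, by omega⟩
    · have h₁ := closedFormProb_add_two_mul (d := d) (T := T) (k + 1) 0
      have h₀ := closedFormProb_add_two_mul (d := d) (T := T) k 0
      simp only [mul_zero, add_zero] at h₁ h₀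
      rw [h₁, h₀, closedFormProb_of_lt (by omega), hT0, hT0, hd]
      ring
    · rw [show k + 2 * (m + 1) + 1 = k + 1 + 2 * (m + 1) by ring, closedFormProb_add_two_mul,
        closedFormProb_add_two_mul, show k + 2 * (m + 1) = k + 2 + 2 * m by ring,
        closedFormProb_add_two_mul]
      exact mul_T_succ_succ hd hd0 hTrec m k
  · simp only [closedFormProb]
    rw [if_neg (by omega), if_neg hnk, if_neg (by omega)]
    ring

end ClosedForm

theorem stmt_14_general (α : ℝ)
    (d : ℕ → ℝ)
    (hd : ∀ k : ℕ, d k = ∏ i ∈ Finset.range (k + 1), 1 / (1 + (i : ℝ) * ((i : ℝ) - 1) * α ^ 2))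
    (T : ℕ → ℕ → ℝ)
    (hT0 : ∀ k : ℕ, T 0 k = 1)
    (hTrec : ∀ h k : ℕ,
      T (h + 1) k = ∑ i ∈ Finset.range (k + 1), ((d (i + 1) - d (i + 2)) / d i) * T h (i + 1))
    (p : ℕ → ℕ → ℝ)
    (hp : ∀ n k : ℕ, p n k =
      if k ≤ n ∧ (n + k) % 2 = 0 then d k * T ((n - k) / 2) k else 0) :
    p 0 0 = 1 ∧
    (∀ n k : ℕ, n < k → p n k = 0) ∧
    (∀ n k : ℕ, 1 ≤ k → k ≤ n + 1 →
      p (n + 1) k =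
        (1 / (1 + (k : ℝ) * ((k : ℝ) - 1) * α ^ 2)) * p n (k - 1) +
        (((k : ℝ) + 2) * ((k : ℝ) + 1) * α ^ 2 / (1 + ((k : ℝ) + 2) * ((k : ℝ) + 1) * α ^ 2)) *
          p n (k + 1)) := by
  obtain rfl : p = closedFormProb d T := funext₂ hp
  have hd' : ∀ k, d k = ∏ i ∈ range (k + 1), upProb α i := hd
  have hd_succ : ∀ k, d (k + 1) = d k * upProb α (k + 1) := fun k => by
    rw [hd', prod_range_succ, ← hd']
  have hd0 : ∀ k, d k ≠ 0 := fun k => by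
    rw [hd']
    exact prod_ne_zero_iff.2 fun i _ => upProb_ne_zero α i
  refine ⟨by simp [closedFormProb, hd, hT0], fun n k => closedFormProb_of_lt, fun n k hk _ => ?_⟩
  obtain ⟨k, rfl⟩ := Nat.exists_eq_add_of_le' hk
  rw [← one_sub_upProb_add_two]
  exact closedFormProb_succ_succ hd_succ hd0 hT0 hTrec n k

/-- The numbers `p_{n,k} = d_k T^{((n-k)/2)}_k` (for `n+k` even, `0 ≤ k ≤ n`; `0`
otherwise), where `d_k = Π_{i=0}^k 1/(1+i(i-1)α²)` and `T^{(h)}_k` is given by the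
stated recursion, satisfy the embedded-chain recursion of the discouragement queue:
`p_{n+1,k} = p_{n,k-1}/(1+k(k-1)α²) + p_{n,k+1}·(k+2)(k+1)α²/(1+(k+2)(k+1)α²)`,
with `p_{0,0} = 1` and `p_{n,k} = 0` for `k > n`. -/
theorem stmt_14 (α : ℝ) (hα : 0 < α)
    (d : ℕ → ℝ)
    (hd : ∀ k : ℕ, d k = ∏ i ∈ Finset.range (k + 1), 1 / (1 + (i : ℝ) * ((i : ℝ) - 1) * α ^ 2))
    (T : ℕ → ℕ → ℝ)
    (hT0 : ∀ k : ℕ, T 0 k = 1)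
    (hTrec : ∀ h k : ℕ,
      T (h + 1) k = ∑ i ∈ Finset.range (k + 1), ((d (i + 1) - d (i + 2)) / d i) * T h (i + 1))
    (p : ℕ → ℕ → ℝ)
    (hp : ∀ n k : ℕ, p n k =
      if k ≤ n ∧ (n + k) % 2 = 0 then d k * T ((n - k) / 2) k else 0) :
    p 0 0 = 1 ∧
    (∀ n k : ℕ, n < k → p n k = 0) ∧
    (∀ n k : ℕ, 1 ≤ k → k ≤ n + 1 →
      p (n + 1) k =
        (1 / (1 + (k : ℝ) * ((k : ℝ) - 1) * α ^ 2)) * p n (k - 1) +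
        (((k : ℝ) + 2) * ((k : ℝ) + 1) * α ^ 2 / (1 + ((k : ℝ) + 2) * ((k : ℝ) + 1) * α ^ 2)) *
          p n (k + 1)) :=
  stmt_14_general α d hd T hT0 hTrec p hp
end

section
/- For the pure birth process transient distribution p(k,t) = (1/k!) Σ_{j=1}^{k+1} (-1)^{k+1-j} j^k C(k+1,j) e^{-λt/j}, each p(k,t) is nonnegative for all t ≥ 0 and k ≥ 0. -/
/-!
Put `c = λ t` and `F x = x ^ k * exp (-c / x)` for `x > 0`, `F x = 0` for `x ≤ 0`; for `c > 0`
this is smooth (it is `x ^ k` times `expNegInvGlue (x / c)`), and `k! * p(k,t)` is the forward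
difference `Δ^(k+1) F 0`. The classical identity
`(x ^ n * f (1/x))^(n+1) = (-1)^(n+1) * x^(-n-2) * f^(n+1) (1/x)` applied to `f u = exp (-c u)`
gives `F^(k+1) x = c^(k+1) * x^(-k-2) * exp (-c / x) ≥ 0` for `x > 0`, hence everywhere, and a
function whose `n`-th derivative is nonnegative has nonnegative `n`-th forward differences.
The case `t = 0` follows by continuity in `t`.
-/

open Finset Real

open fwdDiff
open scoped ContDiff

section IteratedDeriv

variable {𝕜 : Type*} [NontriviallyNormedField 𝕜]

theorem iteratedDeriv_succ_id_mul {f : 𝕜 → 𝕜} {x : 𝕜} {n : ℕ} (hf : ContDiffAt 𝕜 (n + 1) f x) :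
    iteratedDeriv (n + 1) (fun y => y * f y) x
      = x * iteratedDeriv (n + 1) f x + (n + 1) * iteratedDeriv n f x := by
  rw [show (fun y => y * f y) = id * f from rfl, iteratedDeriv_mul contDiffAt_id hf]
  simpa [Finset.sum_range_succ', iteratedDeriv_id] using add_comm _ _

theorem hasDerivAt_comp_inv {f : 𝕜 → 𝕜} {x : 𝕜} (hf : DifferentiableAt 𝕜 f x⁻¹) (hx : x ≠ 0) :
    HasDerivAt (fun y => f y⁻¹) (-(x ^ 2)⁻¹ * deriv f x⁻¹) x :=
  (hf.hasDerivAt.comp x (hasDerivAt_inv hx)).congr_deriv (mul_comm _ _)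

theorem hasDerivAt_pow_succ_mul_comp_inv {f : 𝕜 → 𝕜} (n : ℕ) {x : 𝕜}
    (hf : DifferentiableAt 𝕜 f x⁻¹) (hx : x ≠ 0) :
    HasDerivAt (fun y => y ^ (n + 1) * f y⁻¹)
      (x ^ n * ((n + 1) * f x⁻¹ - x⁻¹ * deriv f x⁻¹)) x := by
  refine ((hasDerivAt_pow (n + 1) x).mul (hasDerivAt_comp_inv hf hx)).congr_deriv ?_
  field_simp
  push_cast
  ring

theorem iteratedDeriv_succ_pow_mul_comp_inv {f : 𝕜 → 𝕜} (hf : ContDiff 𝕜 ∞ f) (n : ℕ) {x : 𝕜}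
    (hx : x ≠ 0) :
    iteratedDeriv (n + 1) (fun y => y ^ n * f y⁻¹) x
      = (-1) ^ (n + 1) * x⁻¹ ^ (n + 2) * iteratedDeriv (n + 1) f x⁻¹ := by
  induction n generalizing f x with
  | zero =>
    simp only [pow_zero, one_mul, zero_add, iteratedDeriv_one,
      (hasDerivAt_comp_inv (hf.differentiable (by simp) _) hx).deriv]
    field_simp
  | succ n ih =>
    have hf' : ContDiff 𝕜 ∞ (deriv f) := (contDiff_infty_iff_deriv.mp hf).2
    have hg : ContDiff 𝕜 ∞ fun u => (n + 1) * f u - u * deriv f u :=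
      (contDiff_const.mul hf).sub (contDiff_id.mul hf')
    have hderiv : deriv (fun y => y ^ (n + 1) * f y⁻¹)
        =ᶠ[nhds x] fun y => y ^ n * ((n + 1) * f y⁻¹ - y⁻¹ * deriv f y⁻¹) :=
      (eventually_ne_nhds hx).mono fun y hy =>
        (hasDerivAt_pow_succ_mul_comp_inv n (hf.differentiable (by simp) _) hy).deriv
    have hg_iter : iteratedDeriv (n + 1) (fun u => (n + 1) * f u - u * deriv f u) x⁻¹
        = -(x⁻¹ * iteratedDeriv (n + 2) f x⁻¹) := by
      rw [iteratedDeriv_fun_sub (f := fun u => ((n : 𝕜) + 1) * f u) (g := fun u => u * deriv f u)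
          (contDiff_infty.1 (contDiff_const.mul hf) _).contDiffAt
          (contDiff_infty.1 (contDiff_id.mul hf') _).contDiffAt,
        iteratedDeriv_const_mul_field,
        iteratedDeriv_succ_id_mul (contDiff_infty.1 hf' _).contDiffAt,
        ← iteratedDeriv_succ', ← iteratedDeriv_succ']
      ring
    rw [iteratedDeriv_succ', hderiv.iteratedDeriv_eq, ih hg hx, hg_iter]
    ring

end IteratedDeriv

theorem fwdDiff_iter_nonneg_of_iteratedDeriv_nonneg {n : ℕ} {f : ℝ → ℝ} (hf : ContDiff ℝ n f)
    (hnn : ∀ x, 0 ≤ iteratedDeriv n f x) {h : ℝ} (hh : 0 ≤ h) (y : ℝ) :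
    0 ≤ (Δ_[h])^[n] f y := by
  induction n generalizing f with
  | zero => exact hnn y
  | succ n ih =>
    rw [Function.iterate_succ_apply]
    have hshift : ContDiff ℝ (n + 1) (fun x => f (x + h)) :=
      hf.comp (contDiff_id.add contDiff_const)
    refine ih (hshift.sub hf).of_succ fun x => ?_
    have hmono : Monotone (iteratedDeriv n f) :=
      monotone_of_deriv_nonneg (hf.differentiable_iteratedDeriv' n)
        fun x => iteratedDeriv_succ (f := f) ▸ hnn x
    have := hmono (le_add_of_nonneg_right hh : x ≤ x + h)
    rw [show Δ_[h] f = fun x => f (x + h) - f x from rfl,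
      iteratedDeriv_fun_sub hshift.of_succ.contDiffAt hf.of_succ.contDiffAt,
      iteratedDeriv_comp_add_const]
    linarith

noncomputable def powMulExpNegInv (c : ℝ) (k : ℕ) (x : ℝ) : ℝ := x ^ k * expNegInvGlue (x / c)

namespace powMulExpNegInv

variable {c : ℝ} {k : ℕ}

theorem contDiff : ContDiff ℝ ∞ (powMulExpNegInv c k) :=
  (contDiff_id.pow k).mul (expNegInvGlue.contDiff.comp (contDiff_id.div_const c))

theorem of_pos (hc : 0 < c) {x : ℝ} (hx : 0 < x) :
    powMulExpNegInv c k x = x ^ k * exp (-c / x) := by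
  rw [powMulExpNegInv, expNegInvGlue, if_neg (div_pos hx hc).not_ge, inv_div, neg_div]

theorem of_nonpos (hc : 0 ≤ c) {x : ℝ} (hx : x ≤ 0) : powMulExpNegInv c k x = 0 := by
  rw [powMulExpNegInv, expNegInvGlue.zero_of_nonpos (div_nonpos_of_nonpos_of_nonneg hx hc),
    mul_zero]

theorem iteratedDeriv_succ_of_pos (hc : 0 < c) {x : ℝ} (hx : 0 < x) :
    iteratedDeriv (k + 1) (powMulExpNegInv c k) x
      = c ^ (k + 1) * x⁻¹ ^ (k + 2) * exp (-c / x) := by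
  have hloc : powMulExpNegInv c k =ᶠ[nhds x] fun y => y ^ k * (fun u => exp (-c * u)) y⁻¹ :=
    (eventually_gt_nhds hx).mono fun y hy => by rw [of_pos hc hy, div_eq_mul_inv]
  have hexp : ContDiff ℝ ∞ fun u => exp (-c * u) := by fun_prop
  rw [hloc.iteratedDeriv_eq, iteratedDeriv_succ_pow_mul_comp_inv hexp k hx.ne',
    iteratedDeriv_exp_const_mul, neg_pow c, div_eq_mul_inv]
  have hsign : (-1 : ℝ) ^ (k + 1) * (-1) ^ (k + 1) = 1 := by rw [← mul_pow]; norm_num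
  linear_combination (c ^ (k + 1) * x⁻¹ ^ (k + 2) * exp (-c * x⁻¹)) * hsign

theorem iteratedDeriv_succ_nonneg (hc : 0 < c) (x : ℝ) :
    0 ≤ iteratedDeriv (k + 1) (powMulExpNegInv c k) x := by
  have hcont : Continuous (iteratedDeriv (k + 1) (powMulExpNegInv c k)) :=
    contDiff.continuous_iteratedDeriv _ (by exact_mod_cast le_top)
  suffices {0}ᶜ ⊆ {x | 0 ≤ iteratedDeriv (k + 1) (powMulExpNegInv c k) x} from
    (isClosed_le continuous_const hcont).closure_subset_iff.2 this
      ((dense_compl_singleton (0 : ℝ)).closure_eq ▸ Set.mem_univ x)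
  intro x hx
  rcases Ne.lt_or_gt hx with hneg | hpos
  · have hloc : powMulExpNegInv c k =ᶠ[nhds x] fun _ => 0 :=
      (eventually_lt_nhds hneg).mono fun y hy => of_nonpos hc.le hy.le
    simp [hloc.iteratedDeriv_eq]
  · rw [Set.mem_ofPred_eq, iteratedDeriv_succ_of_pos hc hpos]
    positivity

end powMulExpNegInv

theorem factorial_mul_birthP (lam : ℝ) (k : ℕ) {t : ℝ} (hc : 0 < lam * t) :
    (k.factorial : ℝ) * birthP lam k t = (Δ_[1])^[k + 1] (powMulExpNegInv (lam * t) k) 0 := by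
  rw [fwdDiff_iter_eq_sum_shift, range_eq_Ico, sum_eq_sum_Ico_succ_bot (by omega), birthP,
    ← mul_assoc, mul_one_div_cancel (by positivity), one_mul]
  simp only [zero_smul, zero_add, powMulExpNegInv.of_nonpos hc.le le_rfl, smul_zero]
  refine sum_congr rfl fun j hj => ?_
  rw [nsmul_one, powMulExpNegInv.of_pos hc (Nat.cast_pos.2 (mem_Icc.1 hj).1), zsmul_eq_mul]
  push_cast
  ring

theorem birthP_nonneg_of_pos {lam : ℝ} (k : ℕ) {t : ℝ} (hc : 0 < lam * t) :
    0 ≤ birthP lam k t := by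
  have hdiff := fwdDiff_iter_nonneg_of_iteratedDeriv_nonneg (n := k + 1)
    (contDiff_infty.1 (powMulExpNegInv.contDiff (c := lam * t)) _) (powMulExpNegInv.iteratedDeriv_succ_nonneg hc)
    zero_le_one 0
  rw [← factorial_mul_birthP lam k hc] at hdiff
  exact (mul_nonneg_iff_of_pos_left (by positivity)).1 hdiff

/-- Each `p(k,t)` is nonnegative for all `t ≥ 0` and `k ≥ 0`. -/
theorem stmt_19 (lam : ℝ) (hlam : 0 < lam) (k : ℕ) (t : ℝ) (ht : 0 ≤ t) :
    0 ≤ birthP lam k t := by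
  have hcont : Continuous (birthP lam k) := by unfold birthP; fun_prop
  have hpos : Set.Ioi 0 ⊆ {t | 0 ≤ birthP lam k t} := fun s hs =>
    birthP_nonneg_of_pos k (mul_pos hlam hs)
  exact (isClosed_le continuous_const hcont).closure_subset_iff.2 hpos (by rwa [closure_Ioi])
end
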